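/- arXiv:2307.02968 — 8 statements merged into one kernel-verified Lean document; each statement's English description precedes it below -/
import Mathlib

section
/- Let E be a finite nonempty set of edges, q : E → ℝ with q_e > 0 for all e, Q = Σ_{e ∈ E} q_e, let ε ∈ (0,1) and n ≥ 1 be an integer, and for each e ∈ E set p_e = min(1, (2n/ε)·q_e/Q). If F ⊆ E satisfies Σ_{e ∈ F} q_e > (ε/2)·Q, then Π_{e ∈ F} (1 − p_e) ≤ exp(−n). -/
open Finset

/-- Let `E` be a finite nonempty set of edges, `q : E → ℝ` positive on `E`,
`Q = ∑_{e ∈ E} q e`, `ε ∈ (0,1)`, `n ≥ 1` an integer, and `p e = min 1 ((2n/ε) · q e / Q)`.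
If `F ⊆ E` has `∑_{e ∈ F} q e > (ε/2)·Q`, then `∏_{e ∈ F} (1 - p e) ≤ exp (-n)`. -/
theorem stmt_0 {α : Type*} (E : Finset α) (hE : E.Nonempty)
    (q : α → ℝ) (hq : ∀ e ∈ E, 0 < q e)
    (Q : ℝ) (hQ : Q = ∑ e ∈ E, q e)
    (ε : ℝ) (hε0 : 0 < ε) (hε1 : ε < 1)
    (n : ℕ) (hn : 1 ≤ n)
    (p : α → ℝ) (hp : ∀ e ∈ E, p e = min 1 ((2 * n / ε) * (q e / Q)))
    (F : Finset α) (hF : F ⊆ E)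
    (hbig : (ε / 2) * Q < ∑ e ∈ F, q e) :
    ∏ e ∈ F, (1 - p e) ≤ Real.exp (-(n : ℝ)) := by
  have hQpos : 0 < Q := by
    rw [hQ]; exact Finset.sum_pos hq hE
  have hple : ∀ e ∈ F, p e ≤ 1 := fun e he => by
    rw [hp e (hF he)]; exact min_le_left _ _
  by_cases hone : ∃ e ∈ F, 1 ≤ (2 * n / ε) * (q e / Q)
  · obtain ⟨e, he, h1⟩ := hone
    have : ∏ x ∈ F, (1 - p x) = 0 := by
      apply Finset.prod_eq_zero he
      rw [hp e (hF he), min_eq_left h1]; ring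
    rw [this]; positivity
  · push_neg at hone
    have hpe : ∀ e ∈ F, p e = (2 * n / ε) * (q e / Q) := fun e he => by
      rw [hp e (hF he), min_eq_right (le_of_lt (hone e he))]
    calc ∏ e ∈ F, (1 - p e) ≤ ∏ e ∈ F, Real.exp (-(p e)) := by
          apply Finset.prod_le_prod
          · intro e he; linarith [hple e he]
          · intro e he
            have := Real.add_one_le_exp (-(p e))
            linarith
      _ = Real.exp (-(∑ e ∈ F, p e)) := by
          rw [← Real.exp_sum]; rw [← Finset.sum_neg_distrib]
      _ ≤ Real.exp (-(n : ℝ)) := by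
          apply Real.exp_le_exp.2
          have hsum : (n : ℝ) ≤ ∑ e ∈ F, p e := by
            have : ∑ e ∈ F, p e = (2 * n / ε) * ((∑ e ∈ F, q e) / Q) := by
              rw [Finset.sum_congr rfl hpe, ← Finset.mul_sum, ← Finset.sum_div]
            rw [this]
            have hn1 : (1 : ℝ) ≤ n := by exact_mod_cast hn
            have h3 : ε / 2 < (∑ e ∈ F, q e) / Q := by
              rw [lt_div_iff₀ hQpos]; linarith
            have h4 : 0 < 2 * (n:ℝ) / ε := by positivity
            calc (n : ℝ) = (2 * n / ε) * (ε / 2) := by field_simp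
              _ ≤ (2 * n / ε) * ((∑ e ∈ F, q e) / Q) := by
                  exact mul_le_mul_of_nonneg_left h3.le h4.le
          linarith
end

section
/- Let G = (V, E) be a finite simple graph with m = |E| ≥ 1 edges, ε ∈ (0,1), and R ≥ 1 an integer with ε·R ≥ 4·log₂ m. Let U_1, …, U_R ⊆ V be arbitrary vertex sets; let F_r ⊆ E be the set of edges of G with neither endpoint in U_r, and define q^{(1)}_e = 1 and q^{(r+1)}_e = 2·q^{(r)}_e if e ∈ F_r, q^{(r+1)}_e = q^{(r)}_e otherwise, with Q^{(r)} = Σ_{e ∈ E} q^{(r)}_e. If for every r ∈ {1, …, R} we have Σ_{e ∈ F_r} q^{(r)}_e ≤ (ε/2)·Q^{(r)}, then there exists r ∈ {1, …, R} with |U_r| ≥ (1 − ε)·μ(G). -/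
open Finset
open scoped Classical

/-- The maximum matching size `μ(G)` of a graph: the supremum of cardinalities of finite sets
of pairwise vertex-disjoint edges of `G`. -/
noncomputable def matchingNumber {V : Type*} (G : SimpleGraph V) : ℕ :=
  sSup {k : ℕ | ∃ M : Finset (Sym2 V), (∀ e ∈ M, e ∈ G.edgeSet) ∧
    (∀ e ∈ M, ∀ f ∈ M, e ≠ f → ∀ v, v ∈ e → v ∉ f) ∧ M.card = k}

/-- Deterministic core of Theorem 3.1: if in each round `r` the edges of `G`
left uncovered by `U_r` carry at most an `(ε/2)`-fraction of the total importance `Q^{(r)}`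
(importances of uncovered edges being doubled each round), and `ε·R ≥ 4·log₂ m`, then some
`U_r` has size at least `(1 - ε)·μ(G)`. -/
theorem stmt_4 {V : Type*} [Fintype V] (G : SimpleGraph V) [Fintype G.edgeSet]
    (hm : 1 ≤ G.edgeFinset.card)
    (ε : ℝ) (hε0 : 0 < ε) (hε1 : ε < 1)
    (R : ℕ) (hR : 1 ≤ R)
    (hεR : 4 * Real.logb 2 (G.edgeFinset.card : ℝ) ≤ ε * R)
    (U : ℕ → Finset V)
    (F : ℕ → Finset (Sym2 V))
    (hF : ∀ r, F r = G.edgeFinset.filter (fun e => ∀ v ∈ e, v ∉ U r))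
    (q : ℕ → Sym2 V → ℝ)
    (hq1 : ∀ e, q 1 e = 1)
    (hqstep : ∀ r ∈ Finset.Icc 1 R, ∀ e,
      q (r + 1) e = if e ∈ F r then 2 * q r e else q r e)
    (Q : ℕ → ℝ) (hQ : ∀ r, Q r = ∑ e ∈ G.edgeFinset, q r e)
    (hsmall : ∀ r ∈ Finset.Icc 1 R, ∑ e ∈ F r, q r e ≤ (ε / 2) * Q r) :
    ∃ r ∈ Finset.Icc 1 R, (1 - ε) * (matchingNumber G : ℝ) ≤ ((U r).card : ℝ) := by
  classical
  set m := G.edgeFinset.card with hmdef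
  set μ := matchingNumber G with hμdef
  -- a maximum matching exists
  have hSmem : μ ∈ {k : ℕ | ∃ M : Finset (Sym2 V), (∀ e ∈ M, e ∈ G.edgeSet) ∧
      (∀ e ∈ M, ∀ f ∈ M, e ≠ f → ∀ v, v ∈ e → v ∉ f) ∧ M.card = k} := by
    apply Nat.sSup_mem
    · exact ⟨0, ∅, by simp, by simp, by simp⟩
    · refine ⟨m, ?_⟩
      rintro k ⟨M, hM1, _, rfl⟩
      exact Finset.card_le_card (fun e he => SimpleGraph.mem_edgeFinset.2 (hM1 e he))
  obtain ⟨M, hMedge, hMdisj, hMcard⟩ := hSmem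
  have hMsub : M ⊆ G.edgeFinset := fun e he => SimpleGraph.mem_edgeFinset.2 (hMedge e he)
  rcases Nat.eq_zero_or_pos μ with hμ0 | hμpos
  · exact ⟨1, by simp [hR], by simp [← hμdef, hμ0]⟩
  by_contra hcon
  push_neg at hcon
  have hU : ∀ r ∈ Finset.Icc 1 R, ((U r).card : ℝ) < (1 - ε) * μ := hcon
  -- each round, many matching edges are uncovered
  have hlow : ∀ r ∈ Finset.Icc 1 R,
      ε * μ < ((M.filter (fun e => e ∈ F r)).card : ℝ) := by
    intro r hr
    have hcov : (M.filter (fun e => e ∉ F r)).card ≤ (U r).card := by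
      have hex : ∀ e ∈ M.filter (fun e => e ∉ F r), ∃ v, v ∈ e ∧ v ∈ U r := by
        intro e he
        rw [Finset.mem_filter] at he
        have he1 : e ∈ G.edgeFinset := hMsub he.1
        have := he.2
        rw [hF r, Finset.mem_filter] at this
        push_neg at this
        obtain ⟨v, hv1, hv2⟩ := this he1
        exact ⟨v, hv1, hv2⟩
      have hne : Nonempty V := by
        obtain ⟨e0, _⟩ := Finset.card_pos.1 hm
        exact ⟨(Quot.out e0).1⟩
      apply Finset.card_le_card_of_injOn
        (fun e => if h : ∃ v, v ∈ e ∧ v ∈ U r then h.choose else Classical.arbitrary V)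
      · intro e he
        have h := hex e he
        simp only [dif_pos h]
        exact h.choose_spec.2
      · intro e1 h1 e2 h2 heq
        by_contra hne12
        have hx1 := hex e1 h1
        have hx2 := hex e2 h2
        simp only [dif_pos hx1, dif_pos hx2] at heq
        have hv1 : hx1.choose ∈ e1 := hx1.choose_spec.1
        have hv2 : hx1.choose ∈ e2 := heq ▸ hx2.choose_spec.1
        exact hMdisj e1 (Finset.mem_filter.1 h1).1 e2 (Finset.mem_filter.1 h2).1 hne12
          hx1.choose hv1 hv2
    have hsplit : (M.filter (fun e => e ∈ F r)).card + (M.filter (fun e => e ∉ F r)).card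
        = μ := by
      rw [Finset.card_filter_add_card_filter_not, hMcard]
    have hUr := hU r hr
    have h1 : ((M.filter (fun e => e ∉ F r)).card : ℝ) ≤ (U r).card := by exact_mod_cast hcov
    have h2 : ((M.filter (fun e => e ∈ F r)).card : ℝ)
        + ((M.filter (fun e => e ∉ F r)).card : ℝ) = μ := by exact_mod_cast hsplit
    have hμ1 : (1 : ℝ) ≤ μ := by exact_mod_cast hμpos
    nlinarith
  -- double counting: d e = number of rounds in which e is uncovered
  set d : Sym2 V → ℕ := fun e => ((Finset.Icc 1 R).filter (fun r => e ∈ F r)).card with hd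
  have hdc : ∑ r ∈ Finset.Icc 1 R, ((M.filter (fun e => e ∈ F r)).card)
      = ∑ e ∈ M, d e := by
    simp only [hd, Finset.card_filter]
    rw [Finset.sum_comm]
  -- some edge is uncovered in more than εR rounds
  have hbig : ∃ e ∈ M, ε * R < (d e : ℝ) := by
    by_contra hno
    push_neg at hno
    have h1 : (∑ e ∈ M, (d e : ℝ)) ≤ μ * (ε * R) := by
      calc (∑ e ∈ M, (d e : ℝ)) ≤ ∑ _e ∈ M, ε * R := Finset.sum_le_sum (fun e he => hno e he)
        _ = μ * (ε * R) := by rw [Finset.sum_const, hMcard]; ring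
    have h2 : (R : ℝ) * (ε * μ) < ∑ r ∈ Finset.Icc 1 R, ((M.filter (fun e => e ∈ F r)).card : ℝ) := by
      have hne : (Finset.Icc 1 R).Nonempty := ⟨1, by simp [hR]⟩
      calc (R : ℝ) * (ε * μ) = ∑ _r ∈ Finset.Icc 1 R, ε * μ := by
            rw [Finset.sum_const, Nat.card_Icc]; simp
        _ < _ := Finset.sum_lt_sum_of_nonempty hne (fun r hr => hlow r hr)
    rw [show (∑ r ∈ Finset.Icc 1 R, ((M.filter (fun e => e ∈ F r)).card : ℝ))
        = ((∑ r ∈ Finset.Icc 1 R, (M.filter (fun e => e ∈ F r)).card : ℕ) : ℝ) by push_cast; ring,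
      hdc] at h2
    push_cast at h2
    nlinarith
  obtain ⟨estar, hestar, hdstar⟩ := hbig
  -- importance formula: q (r+1) e = 2 ^ (number of uncovered rounds among 1..r)
  have hqf : ∀ r, r ≤ R → ∀ e,
      q (r + 1) e = 2 ^ (((Finset.Icc 1 r).filter (fun s => e ∈ F s)).card) := by
    intro r
    induction r with
    | zero => intro _ e; simp [hq1]
    | succ n ih =>
      intro hn e
      rw [hqstep (n + 1) (by simp; omega) e, ih (by omega) e]
      rw [← Finset.insert_Icc_right_eq_Icc_add_one (by omega : 1 ≤ n + 1),
        Finset.filter_insert]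
      by_cases hcase : e ∈ F (n + 1)
      · rw [if_pos hcase, if_pos hcase, Finset.card_insert_of_notMem (by simp)]
        ring
      · rw [if_neg hcase, if_neg hcase]
  -- upper bound on total importance
  have hQub : ∀ r, r ≤ R → Q (r + 1) ≤ (1 + ε / 2) ^ r * m := by
    intro r
    induction r with
    | zero => intro _; simp [hQ, hq1, hmdef]
    | succ n ih =>
      intro hn
      have hn' : n + 1 ∈ Finset.Icc 1 R := by simp; omega
      have hstep : Q (n + 2) ≤ (1 + ε / 2) * Q (n + 1) := by
        have hFsub : G.edgeFinset.filter (fun e => e ∈ F (n + 1)) = F (n + 1) := by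
          ext e; simp [hF (n + 1)]
        have : Q (n + 2) = Q (n + 1) + ∑ e ∈ F (n + 1), q (n + 1) e := by
          rw [hQ (n + 2), hQ (n + 1), ← hFsub, Finset.sum_filter]
          rw [← Finset.sum_add_distrib]
          apply Finset.sum_congr rfl
          intro e _
          rw [hqstep (n + 1) hn' e]
          split_ifs <;> ring
        rw [this]
        have := hsmall (n + 1) hn'
        linarith
      calc Q (n + 2) ≤ (1 + ε / 2) * Q (n + 1) := hstep
        _ ≤ (1 + ε / 2) * ((1 + ε / 2) ^ n * m) := by
            apply mul_le_mul_of_nonneg_left (ih (by omega)); linarith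
        _ = (1 + ε / 2) ^ (n + 1) * m := by ring
  -- lower bound on total importance
  have hqnn : ∀ e ∈ G.edgeFinset, (0 : ℝ) ≤ q (R + 1) e := by
    intro e _
    rw [hqf R le_rfl e]
    positivity
  have hQlb : (2 : ℝ) ^ (d estar) ≤ Q (R + 1) := by
    rw [hQ (R + 1)]
    have := Finset.single_le_sum hqnn (hMsub hestar)
    rwa [hqf R le_rfl estar] at this
  -- combine
  have hm1 : (1 : ℝ) ≤ m := by exact_mod_cast hm
  have hkey : (2 : ℝ) ^ (ε * R) < (1 + ε / 2) ^ R * m := by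
    calc (2 : ℝ) ^ (ε * R) < (2 : ℝ) ^ ((d estar : ℝ)) := by
          apply Real.rpow_lt_rpow_left_iff (by norm_num : (1:ℝ) < 2) |>.2 hdstar
      _ = (2 : ℝ) ^ (d estar) := by rw [Real.rpow_natCast]
      _ ≤ Q (R + 1) := hQlb
      _ ≤ (1 + ε / 2) ^ R * m := hQub R le_rfl
  -- take logs
  have hRHSpos : (0 : ℝ) < (1 + ε / 2) ^ R * m := by positivity
  have hlog : ε * R < Real.logb 2 ((1 + ε / 2) ^ R * m) := by
    have h2 : (1:ℝ) < 2 := by norm_num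
    have := Real.logb_lt_logb h2 (by positivity : (0:ℝ) < (2:ℝ) ^ (ε * R)) hkey
    rwa [Real.logb_rpow (by norm_num : (0:ℝ) < 2) (by norm_num : (2:ℝ) ≠ 1)] at this
  rw [Real.logb_mul (by positivity) (by positivity), Real.logb_pow] at hlog
  have hlogb_small : Real.logb 2 (1 + ε / 2) < 3 / 4 * ε := by
    have hlog2 : (0.6931471803 : ℝ) < Real.log 2 := Real.log_two_gt_d9
    have h1 : Real.log (1 + ε / 2) ≤ ε / 2 := by
      have := Real.log_le_sub_one_of_pos (by linarith : (0:ℝ) < 1 + ε / 2)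
      linarith
    rw [Real.logb]
    rw [div_lt_iff₀ (by linarith)]
    nlinarith
  have hlogm : Real.logb 2 (m : ℝ) ≤ ε * R / 4 := by
    rw [hmdef] at hεR ⊢
    linarith
  have hRpos : (0 : ℝ) < R := by exact_mod_cast hR
  nlinarith
end

section
/- Let V be a finite set with |V| = n ≥ 1, E a finite set of edges on V (each edge having two endpoints in V), q : E → ℝ with q_e > 0, Q = Σ_{e ∈ E} q_e, and ε ∈ (0,1). Sample a random subset S ⊆ E by including each edge e ∈ E independently with probability p_e = min(1, (2n/ε)·q_e/Q). Then the probability that there exists a set U ⊆ V which covers every edge of S but satisfies Σ_{e ∈ E not covered by U} q_e > (ε/2)·Q is at most 2^n · exp(−n). -/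
open Finset
open scoped Classical

private lemma sum_union_le' {α : Type*} [DecidableEq α] (A B : Finset α) (f : α → ℝ)
    (hf : ∀ x ∈ A ∪ B, 0 ≤ f x) : ∑ x ∈ A ∪ B, f x ≤ ∑ x ∈ A, f x + ∑ x ∈ B, f x := by
  rw [← Finset.sum_union_inter]
  have : 0 ≤ ∑ x ∈ A ∩ B, f x :=
    Finset.sum_nonneg fun x hx => hf x (Finset.mem_union_left _ (Finset.mem_inter.mp hx).1)
  linarith

private lemma sum_biUnion_le' {ι α : Type*} [DecidableEq α] (s : Finset ι) (t : ι → Finset α)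
    (f : α → ℝ) (hf : ∀ x ∈ s.biUnion t, 0 ≤ f x) :
    ∑ x ∈ s.biUnion t, f x ≤ ∑ i ∈ s, ∑ x ∈ t i, f x := by
  classical
  induction s using Finset.induction with
  | empty => simp
  | insert a s hi ih =>
    rw [Finset.biUnion_insert] at hf ⊢
    rw [Finset.sum_insert hi]
    have h1 := sum_union_le' (t a) (s.biUnion t) f hf
    have h2 := ih (fun x hx => hf x (Finset.mem_union_right _ hx))
    linarith

/-- Sampling each edge `e ∈ E` independently with probability
`p e = min 1 ((2n/ε)·q e/Q)`, the probability (i.e. the sum, over all sampled subsets `S ⊆ E`,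
of `∏_{e ∈ S} p e · ∏_{e ∈ E∖S} (1 - p e)`) that some vertex set `U` covers all of `S` yet the
edges of `E` uncovered by `U` carry importance more than `(ε/2)·Q` is at most `2^n·exp(-n)`. -/
theorem stmt_5 {V : Type*} [Fintype V] (hn : 1 ≤ Fintype.card V)
    (E : Finset (Sym2 V))
    (q : Sym2 V → ℝ) (hq : ∀ e ∈ E, 0 < q e)
    (Q : ℝ) (hQ : Q = ∑ e ∈ E, q e)
    (ε : ℝ) (hε0 : 0 < ε) (hε1 : ε < 1)
    (p : Sym2 V → ℝ)
    (hp : ∀ e ∈ E, p e = min 1 ((2 * Fintype.card V / ε) * (q e / Q))) :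
    ∑ S ∈ E.powerset.filter (fun S =>
        ∃ U : Finset V, (∀ e ∈ S, ∃ v ∈ U, v ∈ e) ∧
          (ε / 2) * Q < ∑ e ∈ E.filter (fun e => ∀ v ∈ e, v ∉ U), q e),
      ((∏ e ∈ S, p e) * ∏ e ∈ E \ S, (1 - p e))
      ≤ (2 : ℝ) ^ Fintype.card V * Real.exp (-(Fintype.card V : ℝ)) := by
  classical
  set n := Fintype.card V with hncard
  have hRHSpos : 0 < (2 : ℝ) ^ n * Real.exp (-(n : ℝ)) :=
    mul_pos (by positivity) (Real.exp_pos _)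
  by_cases hE : E = ∅
  · subst hE
    have hQ0 : Q = 0 := by simp [hQ]
    have hempty : (∅ : Finset (Sym2 V)).powerset.filter (fun S =>
        ∃ U : Finset V, (∀ e ∈ S, ∃ v ∈ U, v ∈ e) ∧
          (ε / 2) * Q < ∑ e ∈ (∅ : Finset (Sym2 V)).filter (fun e => ∀ v ∈ e, v ∉ U), q e)
        = ∅ := by
      apply Finset.filter_false_of_mem
      intro S _
      rintro ⟨U, -, h⟩
      rw [Finset.filter_empty, Finset.sum_empty, hQ0] at h
      nlinarith
    rw [hempty, Finset.sum_empty]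
    exact hRHSpos.le
  have hQpos : 0 < Q := by
    rw [hQ]
    exact Finset.sum_pos hq (Finset.nonempty_iff_ne_empty.mpr hE)
  have hnpos : (0 : ℝ) < n := by exact_mod_cast hn
  have hp0 : ∀ e ∈ E, 0 ≤ p e := by
    intro e he; rw [hp e he]
    refine le_min zero_le_one ?_
    have := hq e he
    positivity
  have hp1 : ∀ e ∈ E, p e ≤ 1 := fun e he => by rw [hp e he]; exact min_le_left _ _
  set w : Finset (Sym2 V) → ℝ := fun S => (∏ e ∈ S, p e) * ∏ e ∈ E \ S, (1 - p e) with hw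
  have hwnn : ∀ S, S ⊆ E → 0 ≤ w S := by
    intro S hS
    exact mul_nonneg (Finset.prod_nonneg fun e he => hp0 e (hS he))
      (Finset.prod_nonneg fun e he => by
        have := hp1 e (Finset.mem_sdiff.mp he).1; linarith)
  set B : Finset V → Finset (Sym2 V) := fun U => E.filter (fun e => ∀ v ∈ e, v ∉ U) with hB
  set T : Finset V → Finset (Finset (Sym2 V)) := fun U =>
    E.powerset.filter (fun S => (∀ e ∈ S, ∃ v ∈ U, v ∈ e) ∧
      (ε / 2) * Q < ∑ e ∈ B U, q e) with hT
  have hTsubE : ∀ U S, S ∈ T U → S ⊆ E := by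
    intro U S hS
    exact Finset.mem_powerset.mp (Finset.mem_filter.mp hS).1
  have hsub : E.powerset.filter (fun S =>
      ∃ U : Finset V, (∀ e ∈ S, ∃ v ∈ U, v ∈ e) ∧
        (ε / 2) * Q < ∑ e ∈ E.filter (fun e => ∀ v ∈ e, v ∉ U), q e)
      ⊆ (Finset.univ : Finset (Finset V)).biUnion T := by
    intro S hS
    rw [Finset.mem_filter] at hS
    obtain ⟨hSE, U, h1, h2⟩ := hS
    exact Finset.mem_biUnion.mpr ⟨U, Finset.mem_univ _,
      Finset.mem_filter.mpr ⟨hSE, h1, h2⟩⟩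
  -- per-U bound
  have hper : ∀ U : Finset V, ∑ S ∈ T U, w S ≤ Real.exp (-(n : ℝ)) := by
    intro U
    by_cases hbad : (ε / 2) * Q < ∑ e ∈ B U, q e
    · -- T U = (E \ B U).powerset
      have hTU : T U = (E \ B U).powerset := by
        ext S
        simp only [hT, Finset.mem_filter, Finset.mem_powerset]
        constructor
        · rintro ⟨hSE, hcov, -⟩
          intro x hx
          rw [Finset.mem_sdiff]
          refine ⟨hSE hx, ?_⟩
          rw [hB]
          simp only [Finset.mem_filter, not_and]
          intro _
          push_neg
          obtain ⟨v, hvU, hve⟩ := hcov x hx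
          exact ⟨v, hve, hvU⟩
        · intro hS
          have hSE : S ⊆ E := hS.trans (Finset.sdiff_subset)
          refine ⟨hSE, ?_, hbad⟩
          intro e he
          have := (Finset.mem_sdiff.mp (hS he)).2
          rw [hB] at this
          simp only [Finset.mem_filter, not_and] at this
          have := this (hSE he)
          push_neg at this
          obtain ⟨v, hve, hvU⟩ := this
          exact ⟨v, hvU, hve⟩
      have hBE : B U ⊆ E := Finset.filter_subset _ _
      -- factor the sum
      have hfac : ∑ S ∈ T U, w S = ∏ e ∈ B U, (1 - p e) := by
        rw [hTU]
        have hstep : ∀ S ∈ (E \ B U).powerset,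
            w S = (∏ e ∈ B U, (1 - p e)) *
              ((∏ e ∈ S, p e) * ∏ e ∈ (E \ B U) \ S, (1 - p e)) := by
          intro S hS
          rw [Finset.mem_powerset] at hS
          have hsplit : E \ S = B U ∪ ((E \ B U) \ S) := by
            ext x
            simp only [Finset.mem_sdiff, Finset.mem_union]
            constructor
            · rintro ⟨hxE, hxS⟩
              by_cases hxB : x ∈ B U
              · exact Or.inl hxB
              · exact Or.inr ⟨⟨hxE, hxB⟩, hxS⟩
            · rintro (hxB | ⟨⟨hxE, -⟩, hxS⟩)
              · refine ⟨hBE hxB, fun hxS => ?_⟩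
                have := (Finset.mem_sdiff.mp (hS hxS)).2
                exact this hxB
              · exact ⟨hxE, hxS⟩
          have hdisj : Disjoint (B U) ((E \ B U) \ S) := by
            refine Finset.disjoint_left.mpr fun x hx hx' => ?_
            exact ((Finset.mem_sdiff.mp (Finset.mem_sdiff.mp hx').1).2) hx
          rw [hw]
          dsimp only
          rw [hsplit, Finset.prod_union hdisj]
          ring
        rw [Finset.sum_congr rfl hstep, ← Finset.mul_sum, ← Finset.prod_add]
        have : ∏ e ∈ E \ B U, (p e + (1 - p e)) = 1 :=
          Finset.prod_eq_one fun e _ => by ring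
        rw [this, mul_one]
      rw [hfac]
      -- now bound the product
      by_cases hone : ∃ e ∈ B U, 1 ≤ (2 * n / ε) * (q e / Q)
      · obtain ⟨e0, he0, h1⟩ := hone
        have : 1 - p e0 = 0 := by
          rw [hp e0 (hBE he0), min_eq_left h1]; ring
        rw [Finset.prod_eq_zero he0 this]
        exact (Real.exp_pos _).le
      · push_neg at hone
        have hpeq : ∀ e ∈ B U, p e = (2 * n / ε) * (q e / Q) := by
          intro e he
          rw [hp e (hBE he), min_eq_right (hone e he).le]
        have h1 : ∏ e ∈ B U, (1 - p e) ≤ ∏ e ∈ B U, Real.exp (-p e) := by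
          apply Finset.prod_le_prod
          · intro e he
            have := hp1 e (hBE he); linarith
          · intro e he
            have := Real.add_one_le_exp (-p e); linarith
        have h2 : ∏ e ∈ B U, Real.exp (-p e) = Real.exp (-(∑ e ∈ B U, p e)) := by
          rw [← Real.exp_sum, Finset.sum_neg_distrib]
        have h3 : (n : ℝ) ≤ ∑ e ∈ B U, p e := by
          rw [Finset.sum_congr rfl hpeq, ← Finset.mul_sum]
          have hsum : (ε / 2) * Q < ∑ e ∈ B U, q e / Q * Q := by
            rw [Finset.sum_congr rfl fun e _ => (div_mul_cancel₀ (q e) hQpos.ne').symm] at hbad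
            exact hbad
          have hsum2 : ε / 2 < ∑ e ∈ B U, q e / Q := by
            rw [← Finset.sum_mul] at hsum
            exact lt_of_mul_lt_mul_right hsum hQpos.le
          calc (n : ℝ) = (2 * n / ε) * (ε / 2) := by field_simp
            _ ≤ (2 * n / ε) * ∑ e ∈ B U, q e / Q := by
                apply mul_le_mul_of_nonneg_left hsum2.le
                positivity
        calc ∏ e ∈ B U, (1 - p e) ≤ Real.exp (-(∑ e ∈ B U, p e)) := h2 ▸ h1
          _ ≤ Real.exp (-(n : ℝ)) := Real.exp_le_exp.mpr (by linarith)
    · have hTU : T U = ∅ := by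
        rw [hT]
        apply Finset.filter_false_of_mem
        intro S _ h
        exact hbad h.2
      rw [hTU, Finset.sum_empty]
      exact (Real.exp_pos _).le
  calc ∑ S ∈ E.powerset.filter (fun S =>
        ∃ U : Finset V, (∀ e ∈ S, ∃ v ∈ U, v ∈ e) ∧
          (ε / 2) * Q < ∑ e ∈ E.filter (fun e => ∀ v ∈ e, v ∉ U), q e), w S
      ≤ ∑ S ∈ (Finset.univ : Finset (Finset V)).biUnion T, w S := by
        apply Finset.sum_le_sum_of_subset_of_nonneg hsub
        intro S hS _
        obtain ⟨U, -, hSU⟩ := Finset.mem_biUnion.mp hS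
        exact hwnn S (hTsubE U S hSU)
    _ ≤ ∑ U : Finset V, ∑ S ∈ T U, w S := by
        apply sum_biUnion_le'
        intro S hS
        obtain ⟨U, -, hSU⟩ := Finset.mem_biUnion.mp hS
        exact hwnn S (hTsubE U S hSU)
    _ ≤ ∑ _U : Finset V, Real.exp (-(n : ℝ)) := Finset.sum_le_sum fun U _ => hper U
    _ = (2 : ℝ) ^ n * Real.exp (-(n : ℝ)) := by
        rw [Finset.sum_const, Finset.card_univ, Fintype.card_finset, nsmul_eq_mul]
        push_cast
        ring
end

section
/- For every integer n ≥ 1, the number of laminar families consisting of nonempty subsets of an n-element set is at most (4n)^n. -/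
open Finset
open scoped Classical

variable {α : Type*} [DecidableEq α]

def Laminar (F : Finset (Finset α)) : Prop :=
  ∀ A ∈ F, ∀ B ∈ F, A ∩ B = ∅ ∨ A ⊆ B ∨ B ⊆ A

noncomputable def fam (s : Finset α) : Finset (Finset (Finset α)) :=
  (s.powerset.erase ∅).powerset.filter Laminar

lemma mem_fam {s : Finset α} {F : Finset (Finset α)} :
    F ∈ fam s ↔ (∀ A ∈ F, A ⊆ s ∧ A ≠ ∅) ∧ Laminar F := by
  simp only [fam, mem_filter, mem_powerset]
  constructor
  · rintro ⟨h1, h2⟩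
    exact ⟨fun A hA => by have := h1 hA; simp [mem_erase, mem_powerset] at this; tauto, h2⟩
  · rintro ⟨h1, h2⟩
    exact ⟨fun A hA => by simp [mem_erase, mem_powerset]; have := h1 A hA; tauto, h2⟩

lemma laminar_card_bound : ∀ (k : ℕ) (F : Finset (Finset α)), F.card ≤ k → F.Nonempty →
    (∀ A ∈ F, A ≠ ∅) → Laminar F →
    (F.card + 1 ≤ 2 * (F.sup id).card ∧ (F.sup id ∉ F → F.card + 2 ≤ 2 * (F.sup id).card)) := by
  intro k
  induction k with
  | zero =>
      intro F hk hne _ _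
      exact absurd (Finset.card_pos.mpr hne) (by omega)
  | succ k ih =>
      intro F hk hne h0 hl
      obtain ⟨M, hM, hMmax⟩ := Finset.exists_max_image F Finset.card hne
      set F₁ := F.filter (fun A => A ⊆ M) with hF₁
      set F₂ := F.filter (fun A => ¬ A ⊆ M) with hF₂
      have hMF₁ : M ∈ F₁ := by simp [hF₁, hM]
      have hcards : F₁.card + F₂.card = F.card := by
        rw [hF₁, hF₂]; exact Finset.card_filter_add_card_filter_not _
      have hdisj : ∀ A ∈ F₂, A ∩ M = ∅ := by
        intro A hA
        rw [hF₂, mem_filter] at hA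
        rcases hl A hA.1 M hM with h | h | h
        · exact h
        · exact absurd h hA.2
        · have : M = A := Finset.eq_of_subset_of_card_le h (hMmax A hA.1)
          exact absurd (this ▸ Finset.Subset.refl M) hA.2
      have hsupF₁ : F₁.sup id = M := by
        apply le_antisymm
        · exact Finset.sup_le (fun A hA => by rw [hF₁, mem_filter] at hA; exact hA.2)
        · exact Finset.le_sup (f := id) hMF₁
      have hMsubU : M ⊆ F.sup id := Finset.le_sup (f := id) hM
      by_cases h₂ : F₂.Nonempty
      · -- two incomparable maximal parts
        have hc1 : F₁.card ≤ k := by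
          have : 1 ≤ F₂.card := Finset.card_pos.mpr h₂
          omega
        have hc2 : F₂.card ≤ k := by
          have : 1 ≤ F₁.card := Finset.card_pos.mpr ⟨M, hMF₁⟩
          omega
        have hlam1 : Laminar F₁ := fun A hA B hB =>
          hl A (Finset.mem_of_mem_filter _ hA) B (Finset.mem_of_mem_filter _ hB)
        have hlam2 : Laminar F₂ := fun A hA B hB =>
          hl A (Finset.mem_of_mem_filter _ hA) B (Finset.mem_of_mem_filter _ hB)
        have h01 : ∀ A ∈ F₁, A ≠ ∅ := fun A hA => h0 A (Finset.mem_of_mem_filter _ hA)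
        have h02 : ∀ A ∈ F₂, A ≠ ∅ := fun A hA => h0 A (Finset.mem_of_mem_filter _ hA)
        obtain ⟨ineq1, -⟩ := ih F₁ hc1 ⟨M, hMF₁⟩ h01 hlam1
        obtain ⟨ineq2, -⟩ := ih F₂ hc2 h₂ h02 hlam2
        rw [hsupF₁] at ineq1
        -- M and sup F₂ are disjoint, both inside sup F
        have hdisjU : Disjoint M (F₂.sup id) := by
          rw [Finset.disjoint_right]
          intro x hx hxM
          rw [Finset.mem_sup] at hx
          obtain ⟨A, hA, hxA⟩ := hx
          have := hdisj A hA
          have : x ∈ A ∩ M := Finset.mem_inter.mpr ⟨hxA, hxM⟩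
          simp_all
        have hsub : M ∪ F₂.sup id ⊆ F.sup id := by
          apply Finset.union_subset hMsubU
          have h : F₂.sup id ≤ F.sup id :=
            Finset.sup_mono (by rw [hF₂]; exact Finset.filter_subset _ _)
          exact h
        have hcardsum : M.card + (F₂.sup id).card ≤ (F.sup id).card := by
          rw [← Finset.card_union_of_disjoint hdisjU]
          exact Finset.card_le_card hsub
        constructor
        · omega
        · intro _; omega
      · -- all sets below M
        have hF₂e : F₂ = ∅ := Finset.not_nonempty_iff_eq_empty.mp h₂
        have hF₂0 : F₂.card = 0 := by rw [hF₂e]; rfl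
        have hsub1 : F₁ ⊆ F := by rw [hF₁]; exact Finset.filter_subset _ _
        have hFF₁ : F = F₁ := (Finset.eq_of_subset_of_card_le hsub1 (by omega)).symm
        have hsupF : F.sup id = M := by rw [hFF₁, hsupF₁]
        have hvac : F.sup id ∉ F → F.card + 2 ≤ 2 * (F.sup id).card := by
          intro hUF; exact absurd (hsupF ▸ hM) hUF
        refine ⟨?_, hvac⟩
        rw [hsupF]
        set G := F.erase M with hG
        by_cases hGne : G.Nonempty
        · have hGcard : G.card + 1 = F.card := by
            rw [hG, Finset.card_erase_of_mem hM]
            have : 1 ≤ F.card := Finset.card_pos.mpr hne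
            omega
          have hGlam : Laminar G := fun A hA B hB =>
            hl A (Finset.mem_of_mem_erase hA) B (Finset.mem_of_mem_erase hB)
          have hG0 : ∀ A ∈ G, A ≠ ∅ := fun A hA => h0 A (Finset.mem_of_mem_erase hA)
          obtain ⟨ineqG, ineqG2⟩ := ih G (by omega) hGne hG0 hGlam
          have hUG : G.sup id ⊆ M := by
            show G.sup id ≤ M
            apply Finset.sup_le
            intro A hA
            have : A ∈ F₁ := hFF₁ ▸ Finset.mem_of_mem_erase hA
            rw [hF₁, mem_filter] at this; exact this.2
          by_cases hUGM : G.sup id = M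
          · have : G.sup id ∉ G := by rw [hUGM]; exact Finset.notMem_erase M F
            have := ineqG2 this
            rw [hUGM] at this
            omega
          · have : (G.sup id).card < M.card :=
              Finset.card_lt_card (lt_of_le_of_ne hUG hUGM)
            omega
        · have : G = ∅ := Finset.not_nonempty_iff_eq_empty.mp hGne
          have hFM : F = {M} := by
            apply Finset.eq_singleton_iff_unique_mem.mpr
            refine ⟨hM, fun A hA => ?_⟩
            by_contra hAM
            exact hGne ⟨A, Finset.mem_erase.mpr ⟨hAM, hA⟩⟩
          have : 1 ≤ M.card := Finset.card_pos.mpr (Finset.nonempty_iff_ne_empty.mpr (h0 M hM))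
          rw [hFM, Finset.card_singleton]; omega

noncomputable def minSet (C0 : Finset (Finset α)) (h : C0.Nonempty) : Finset α :=
  Classical.choose (Finset.exists_min_image C0 Finset.card h)

lemma minSet_spec (C0 : Finset (Finset α)) (h : C0.Nonempty) :
    minSet C0 h ∈ C0 ∧ ∀ A ∈ C0, (minSet C0 h).card ≤ A.card := by
  have := Classical.choose_spec (Finset.exists_min_image C0 Finset.card h)
  obtain ⟨h1, h2⟩ := this
  exact ⟨h1, h2⟩

noncomputable def chain0 (a : α) (F : Finset (Finset α)) : Finset (Finset α) :=
  F.filter (fun A => a ∈ A ∧ A ≠ {a})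

noncomputable def famErase (a : α) (F : Finset (Finset α)) : Finset (Finset α) :=
  (F.image (fun A => A.erase a)).erase ∅

noncomputable def code (a : α) (F : Finset (Finset α)) :
    Finset (Finset α) × Option (Finset α) × Bool × Bool :=
  if h : (chain0 a F).Nonempty then
    ⟨famErase a F, some ((minSet _ h).erase a), decide ({a} ∈ F),
      decide ((minSet _ h).erase a ∈ F)⟩
  else ⟨famErase a F, none, decide ({a} ∈ F), false⟩

noncomputable def decode (a : α) (x : Finset (Finset α) × Option (Finset α) × Bool × Bool) :
    Finset (Finset α) :=
  (match x.2.1 with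
   | none => x.1
   | some B =>
      (x.1.filter (fun C => ¬ B ⊆ C)) ∪ ((x.1.filter (fun C => B ⊆ C)).image (insert a))
        ∪ (if x.2.2.2 then {B} else ∅))
  ∪ (if x.2.2.1 then {({a} : Finset α)} else ∅)

lemma mem_famErase {a : α} {F : Finset (Finset α)} {C : Finset α} :
    C ∈ famErase a F ↔ C ≠ ∅ ∧ ∃ A ∈ F, A.erase a = C := by
  simp [famErase, mem_erase, Finset.mem_image]

lemma mem_iteB {β : Type*} {b : Bool} {S : Finset β} {A : β} :
    A ∈ (if b then S else ∅) ↔ b = true ∧ A ∈ S := by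
  cases b <;> simp

lemma mem_iteP {β : Type*} {P : Prop} [Decidable P] {S : Finset β} {A : β} :
    A ∈ (if P then S else ∅) ↔ P ∧ A ∈ S := by
  split_ifs with h <;> simp [h]

theorem decode_code (a : α) (F : Finset (Finset α)) (h0 : ∀ A ∈ F, A ≠ ∅) (hl : Laminar F) :
    decode a (code a F) = F := by
  by_cases h : (chain0 a F).Nonempty
  · -- main case
    obtain ⟨hA0mem, hA0min⟩ := minSet_spec _ h
    set A0 := minSet (chain0 a F) h with hA0def
    rw [chain0, mem_filter] at hA0mem
    obtain ⟨hA0F, haA0, hA0ne⟩ := hA0mem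
    set B := A0.erase a with hBdef
    have hBne : B ≠ ∅ := by
      rw [hBdef, Ne, Finset.erase_eq_empty_iff]
      push_neg
      exact ⟨Finset.nonempty_iff_ne_empty.mpr (h0 A0 hA0F), hA0ne⟩
    have hBA0 : insert a B = A0 := Finset.insert_erase haA0
    have hBsubA0 : B ⊆ A0 := Finset.erase_subset _ _
    -- minimality as subset
    have hmin : ∀ A ∈ chain0 a F, A0 ⊆ A := by
      intro A hA
      have hAmem := hA
      rw [chain0, mem_filter] at hAmem
      obtain ⟨hAF, haA, -⟩ := hAmem
      rcases hl A0 hA0F A hAF with hd | hs | hs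
      · exfalso
        have : a ∈ A0 ∩ A := Finset.mem_inter.mpr ⟨haA0, haA⟩
        rw [hd] at this; exact absurd this (Finset.notMem_empty a)
      · exact hs
      · have : A = A0 := Finset.eq_of_subset_of_card_le hs (hA0min A hA)
        rw [this]
    -- key: an a-free set of F containing B equals B
    have hkey : ∀ C ∈ F, a ∉ C → B ⊆ C → C = B := by
      intro C hCF haC hBC
      rcases hl C hCF A0 hA0F with hd | hs | hs
      · exfalso
        obtain ⟨x, hx⟩ := Finset.nonempty_iff_ne_empty.mpr hBne
        have : x ∈ C ∩ A0 := Finset.mem_inter.mpr ⟨hBC hx, hBsubA0 hx⟩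
        rw [hd] at this; exact absurd this (Finset.notMem_empty x)
      · -- C ⊆ A0, a ∉ C so C ⊆ B, with B ⊆ C done
        have : C ⊆ B := fun x hx => Finset.mem_erase.mpr ⟨fun hxa => haC (hxa ▸ hx), hs hx⟩
        exact Finset.Subset.antisymm this hBC
      · exact absurd (hs haA0) haC
    have hcode : code a F = ⟨famErase a F, some B, decide ({a} ∈ F), decide (B ∈ F)⟩ := by
      rw [code, dif_pos h]
    rw [hcode, decode]
    ext A
    simp only [Finset.mem_union, Finset.mem_filter, Finset.mem_image, mem_famErase,
      mem_iteB, mem_iteP, decide_eq_true_eq, Finset.mem_singleton]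
    constructor
    · rintro (((⟨⟨hAne, A', hA'F, hA'e⟩, hnB⟩ | ⟨C, ⟨⟨hCne, A', hA'F, hA'e⟩, hBC⟩, hCA⟩) |
        ⟨hb2, hAB⟩) | ⟨hb1, hAa⟩)
      · -- A ∈ F' with ¬ B ⊆ A : show A ∈ F
        by_cases haA' : a ∈ A'
        · exfalso
          have hA'ne : A' ≠ {a} := by
            intro hh; rw [hh] at hA'e; simp at hA'e; exact hAne hA'e.symm
          have : A' ∈ chain0 a F := by rw [chain0, mem_filter]; exact ⟨hA'F, haA', hA'ne⟩
          have : A0 ⊆ A' := hmin _ this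
          have : B ⊆ A := by
            rw [← hA'e]
            exact fun x hx => Finset.mem_erase.mpr
              ⟨(Finset.mem_erase.mp hx).1, this (Finset.mem_erase.mp hx).2⟩
          exact hnB this
        · rw [Finset.erase_eq_of_notMem haA'] at hA'e
          rw [← hA'e]; exact hA'F
      · -- A = insert a C with C ∈ F', B ⊆ C
        by_cases haA' : a ∈ A'
        · have : A' = insert a C := by rw [← hA'e, Finset.insert_erase haA']
          rw [← hCA, ← this]; exact hA'F
        · rw [Finset.erase_eq_of_notMem haA'] at hA'e
          subst hA'e
          by_cases hCB : A' = B
          · rw [← hCA, hCB, hBA0]; exact hA0F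
          · exact absurd (hkey A' hA'F haA' hBC) hCB
      · rw [hAB]; exact hb2
      · rw [hAa]; exact hb1
    · intro hAF
      by_cases haA : a ∈ A
      · by_cases hAa : A = {a}
        · right; exact ⟨hAa ▸ hAF, hAa⟩
        · -- A ∈ chain0
          have hAc : A ∈ chain0 a F := by rw [chain0, mem_filter]; exact ⟨hAF, haA, hAa⟩
          left; left; right
          refine ⟨A.erase a, ⟨⟨?_, A, hAF, rfl⟩, ?_⟩, Finset.insert_erase haA⟩
          · rw [Ne, Finset.erase_eq_empty_iff]; push_neg; exact ⟨Finset.nonempty_iff_ne_empty.mpr (h0 A hAF), hAa⟩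
          · exact fun x hx => Finset.mem_erase.mpr
              ⟨(Finset.mem_erase.mp hx).1, (hmin A hAc) (Finset.mem_erase.mp hx).2⟩
      · by_cases hBA : B ⊆ A
        · have : A = B := hkey A hAF haA hBA
          left; right
          exact ⟨this ▸ hAF, this⟩
        · left; left; left
          exact ⟨⟨h0 A hAF, A, hAF, Finset.erase_eq_of_notMem haA⟩, hBA⟩
  · -- chain0 empty
    have hcode : code a F = ⟨famErase a F, none, decide ({a} ∈ F), false⟩ := by
      rw [code, dif_neg h]
    rw [hcode, decode]
    ext A
    simp only [Finset.mem_union, mem_famErase, mem_iteB, mem_iteP, decide_eq_true_eq,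
      Finset.mem_singleton]
    constructor
    · rintro (⟨hAne, A', hA'F, hA'e⟩ | ⟨hb1, hAa⟩)
      · by_cases haA' : a ∈ A'
        · exfalso
          have hA'ne : A' ≠ {a} := by
            intro hh; rw [hh] at hA'e; simp at hA'e; exact hAne hA'e.symm
          exact h ⟨A', by rw [chain0, mem_filter]; exact ⟨hA'F, haA', hA'ne⟩⟩
        · rw [Finset.erase_eq_of_notMem haA'] at hA'e; rw [← hA'e]; exact hA'F
      · rw [hAa]; exact hb1
    · intro hAF
      by_cases haA : a ∈ A
      · have hAa : A = {a} := by
          by_contra hh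
          exact h ⟨A, by rw [chain0, mem_filter]; exact ⟨hAF, haA, hh⟩⟩
        right; exact ⟨hAa ▸ hAF, hAa⟩
      · left
        exact ⟨h0 A hAF, A, hAF, Finset.erase_eq_of_notMem haA⟩
-- appended: counting
lemma famErase_mem_fam {s : Finset α} {a : α} {F : Finset (Finset α)}
    (hF : F ∈ fam s) : famErase a F ∈ fam (s.erase a) := by
  rw [mem_fam] at hF ⊢
  obtain ⟨hmem, hl⟩ := hF
  constructor
  · intro C hC
    rw [mem_famErase] at hC
    obtain ⟨hCne, A, hAF, hAe⟩ := hC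
    refine ⟨?_, hCne⟩
    rw [← hAe]
    exact Finset.erase_subset_erase a (hmem A hAF).1
  · intro C hC D hD
    rw [mem_famErase] at hC hD
    obtain ⟨-, A, hAF, hAe⟩ := hC
    obtain ⟨-, B, hBF, hBe⟩ := hD
    rcases hl A hAF B hBF with hd | hs | hs
    · left
      apply Finset.eq_empty_of_forall_notMem
      intro x hx
      rw [Finset.mem_inter, ← hAe, ← hBe] at hx
      have : x ∈ A ∩ B := Finset.mem_inter.mpr
        ⟨Finset.mem_of_mem_erase hx.1, Finset.mem_of_mem_erase hx.2⟩
      rw [hd] at this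
      exact absurd this (Finset.notMem_empty x)
    · right; left; rw [← hAe, ← hBe]; exact Finset.erase_subset_erase a hs
    · right; right; rw [← hAe, ← hBe]; exact Finset.erase_subset_erase a hs

lemma code_fst (a : α) (F : Finset (Finset α)) : (code a F).1 = famErase a F := by
  rw [code]; split <;> rfl

lemma code_snd_mem (a : α) (F : Finset (Finset α)) (h0 : ∀ A ∈ F, A ≠ ∅) :
    (code a F).2.1 ∈ insert none ((famErase a F).image some) := by
  rw [code]
  split
  · next h =>
      simp only [Finset.mem_insert, Finset.mem_image]
      right
      refine ⟨(minSet _ h).erase a, ?_, rfl⟩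
      obtain ⟨hmem0, -⟩ := minSet_spec _ h
      have hmem := Finset.mem_filter.mp hmem0
      rw [mem_famErase]
      refine ⟨?_, minSet _ h, hmem.1, rfl⟩
      rw [Ne, Finset.erase_eq_empty_iff]
      push_neg
      exact ⟨Finset.nonempty_iff_ne_empty.mpr (h0 _ hmem.1), hmem.2.2⟩
  · simp

lemma step (s : Finset α) (a : α) :
    (fam s).card ≤ (4 * max (2 * (s.erase a).card) 1) * (fam (s.erase a)).card := by
  classical
  set s' := s.erase a with hs'
  set T := (fam s').sigma
      (fun F' => (insert none (F'.image some)) ×ˢ (Finset.univ : Finset (Bool × Bool))) with hT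
  have hinj : (fam s).card ≤ T.card := by
    apply Finset.card_le_card_of_injOn
      (fun F => Sigma.mk (code a F).1 ((code a F).2.1, ((code a F).2.2.1, (code a F).2.2.2)))
    · intro F hF
      rw [hT, Finset.mem_coe, Finset.mem_sigma]; beta_reduce
      constructor
      · rw [code_fst]; exact famErase_mem_fam hF
      · rw [Finset.mem_product]
        refine ⟨?_, Finset.mem_univ _⟩
        rw [code_fst]
        exact code_snd_mem a F (fun A hA => ((mem_fam.mp hF).1 A hA).2)
    · intro F1 h1 F2 h2 heq
      have e1 : (code a F1).1 = (code a F2).1 := congrArg Sigma.fst heq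
      have e2 := eq_of_heq (Sigma.ext_iff.mp heq).2
      have hc : code a F1 = code a F2 := by
        refine Prod.ext_iff.mpr ⟨e1, Prod.ext_iff.mpr ⟨?_, Prod.ext_iff.mpr ⟨?_, ?_⟩⟩⟩
        · exact congrArg Prod.fst e2
        · exact congrArg (fun p => p.2.1) e2
        · exact congrArg (fun p => p.2.2) e2
      have d1 := decode_code a F1 (fun A hA => ((mem_fam.mp h1).1 A hA).2) (mem_fam.mp h1).2
      have d2 := decode_code a F2 (fun A hA => ((mem_fam.mp h2).1 A hA).2) (mem_fam.mp h2).2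
      rw [← d1, ← d2, hc]
  have hcardT : T.card ≤ (fam s').card * (max (2 * s'.card) 1 * 4) := by
    rw [hT, Finset.card_sigma]
    have hbound : ∀ F' ∈ fam s',
        ((insert none (F'.image some)) ×ˢ (Finset.univ : Finset (Bool × Bool))).card
          ≤ max (2 * s'.card) 1 * 4 := by
      intro F' hF'
      rw [Finset.card_product]
      have h4 : (Finset.univ : Finset (Bool × Bool)).card = 4 := by decide
      rw [h4]
      apply Nat.mul_le_mul_right
      rcases Finset.eq_empty_or_nonempty F' with he | hne
      · subst he
        simp only [Finset.image_empty]
        rw [Finset.card_insert_of_notMem (Finset.notMem_empty _), Finset.card_empty]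
        exact le_max_right _ _
      · calc (insert none (F'.image some)).card
            ≤ (F'.image some).card + 1 := Finset.card_insert_le _ _
          _ ≤ F'.card + 1 := by
              have := Finset.card_image_le (s := F') (f := some)
              omega
          _ ≤ max (2 * s'.card) 1 := by
              obtain ⟨hmem, hlam⟩ := mem_fam.mp hF'
              obtain ⟨ineq, -⟩ := laminar_card_bound F'.card F' le_rfl hne
                (fun A hA => (hmem A hA).2) hlam
              have hsup : F'.sup id ⊆ s' :=
                Finset.sup_le (fun A hA => (hmem A hA).1)
              have h2 := Finset.card_le_card hsup
              have : 2 * s'.card ≤ max (2 * s'.card) 1 := le_max_left _ _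
              omega
    calc ∑ F' ∈ fam s', ((insert none (F'.image some)) ×ˢ
            (Finset.univ : Finset (Bool × Bool))).card
        ≤ ∑ _F' ∈ fam s', max (2 * s'.card) 1 * 4 := Finset.sum_le_sum hbound
      _ = (fam s').card * (max (2 * s'.card) 1 * 4) := by rw [Finset.sum_const, smul_eq_mul]
  calc (fam s).card ≤ T.card := hinj
    _ ≤ (fam s').card * (max (2 * s'.card) 1 * 4) := hcardT
    _ = 4 * max (2 * s'.card) 1 * (fam s').card := by ring
-- counting induction and arithmetic
def fbound : ℕ → ℕ
  | 0 => 1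
  | (m+1) => 4 * max (2*m) 1 * fbound m

lemma main_bound : ∀ (m : ℕ) (s : Finset α), s.card = m → (fam s).card ≤ fbound m := by
  intro m
  induction m with
  | zero =>
      intro s hs
      have hs0 : s = ∅ := Finset.card_eq_zero.mp hs
      have hsub : fam s ⊆ {∅} := by
        intro F hF
        rw [Finset.mem_singleton]
        obtain ⟨hmem, -⟩ := mem_fam.mp hF
        apply Finset.eq_empty_of_forall_notMem
        intro A hA
        obtain ⟨h1, h2⟩ := hmem A hA
        rw [hs0, Finset.subset_empty] at h1
        exact h2 h1
      have := Finset.card_le_card hsub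
      simpa [fbound] using this
  | succ m ih =>
      intro s hs
      have hne : s.Nonempty := by rw [← Finset.card_pos, hs]; omega
      obtain ⟨a, ha⟩ := hne
      have hcard : (s.erase a).card = m := by
        rw [Finset.card_erase_of_mem ha, hs]
        omega
      calc (fam s).card
          ≤ 4 * max (2 * (s.erase a).card) 1 * (fam (s.erase a)).card := step s a
        _ ≤ 4 * max (2*m) 1 * fbound m := by
            rw [hcard]; exact Nat.mul_le_mul_left _ (ih _ hcard)
        _ = fbound (m+1) := rfl

lemma fbound_succ_eq (m : ℕ) : fbound (m+1) = 4 * 8^m * m.factorial := by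
  induction m with
  | zero => rfl
  | succ m ih =>
      show 4 * max (2*(m+1)) 1 * fbound (m+1) = _
      rw [ih, Nat.max_eq_left (by omega), Nat.factorial_succ, pow_succ]
      ring

lemma four_mul_le_sq (a b : ℕ) : 4 * a * b ≤ (a + b)^2 := by
  zify
  nlinarith [sq_nonneg ((a:ℤ) - b)]

lemma amgm (m : ℕ) : 2^m * m.factorial ≤ (m+1)^m := by
  have h1 : 2^m * m.factorial = ∏ k ∈ Finset.range m, (2*(k+1)) := by
    rw [Finset.prod_mul_distrib, Finset.prod_const, Finset.card_range,
      Finset.prod_range_add_one_eq_factorial]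
  have h2 : (∏ k ∈ Finset.range m, (2*(k+1))) = ∏ k ∈ Finset.range m, (2*(m-k)) := by
    rw [← Finset.prod_range_reflect (fun j => 2*(j+1)) m]
    apply Finset.prod_congr rfl
    intro j hj
    rw [Finset.mem_range] at hj
    congr 1
    omega
  have key : (2^m * m.factorial)^2 ≤ ((m+1)^m)^2 := by
    rw [sq, h1]
    nth_rewrite 2 [h2]
    rw [← Finset.prod_mul_distrib]
    calc (∏ x ∈ Finset.range m, (2*(x+1)*(2*(m-x))))
        ≤ ∏ _x ∈ Finset.range m, (m+1)^2 := by
          apply Finset.prod_le_prod (fun i _ => Nat.zero_le _)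
          intro i hi
          rw [Finset.mem_range] at hi
          have hsum : (i+1)+(m-i) = m+1 := by omega
          calc 2*(i+1)*(2*(m-i)) = 4*(i+1)*(m-i) := by ring
            _ ≤ ((i+1)+(m-i))^2 := four_mul_le_sq _ _
            _ = (m+1)^2 := by rw [hsum]
      _ = ((m+1)^2)^m := by rw [Finset.prod_const, Finset.card_range]
      _ = ((m+1)^m)^2 := by rw [← pow_mul, ← pow_mul, mul_comm]
  exact (Nat.pow_le_pow_iff_left (by norm_num : (2:ℕ) ≠ 0)).mp key

lemma fbound_le (n : ℕ) (hn : 1 ≤ n) : fbound n ≤ (4*n)^n := by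
  obtain ⟨m, rfl⟩ : ∃ m, n = m+1 := ⟨n-1, by omega⟩
  rw [fbound_succ_eq]
  have h8 : (8:ℕ)^m = 4^m * 2^m := by rw [show (8:ℕ) = 4*2 from rfl, mul_pow]
  calc 4 * 8^m * m.factorial = 4^(m+1) * (2^m * m.factorial) := by
        rw [h8, pow_succ]; ring
    _ ≤ 4^(m+1) * (m+1)^m := Nat.mul_le_mul_left _ (amgm m)
    _ ≤ 4^(m+1) * (m+1)^(m+1) :=
        Nat.mul_le_mul_left _ (Nat.pow_le_pow_right (by omega) (by omega))
    _ = (4*(m+1))^(m+1) := (mul_pow 4 (m+1) (m+1)).symm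

/-- The number of laminar families of nonempty subsets of an `n`-element set
is at most `(4n)^n`. -/
theorem stmt_9 (n : ℕ) (hn : 1 ≤ n) :
    ((Finset.univ : Finset (Finset (Finset (Fin n)))).filter
        (fun F => (∀ A ∈ F, A.Nonempty) ∧
          ∀ A ∈ F, ∀ B ∈ F, A ∩ B = ∅ ∨ A ⊆ B ∨ B ⊆ A)).card
      ≤ (4 * n) ^ n := by
  have hEq : ((Finset.univ : Finset (Finset (Finset (Fin n)))).filter
        (fun F => (∀ A ∈ F, A.Nonempty) ∧
          ∀ A ∈ F, ∀ B ∈ F, A ∩ B = ∅ ∨ A ⊆ B ∨ B ⊆ A))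
      = fam (Finset.univ : Finset (Fin n)) := by
    ext F
    simp only [Finset.mem_filter, Finset.mem_univ, true_and, mem_fam, Laminar]
    constructor
    · rintro ⟨h1, h2⟩
      exact ⟨fun A hA => ⟨Finset.subset_univ A,
        Finset.nonempty_iff_ne_empty.mp (h1 A hA)⟩, h2⟩
    · rintro ⟨h1, h2⟩
      exact ⟨fun A hA => Finset.nonempty_iff_ne_empty.mpr (h1 A hA).2, h2⟩
  rw [hEq]
  have hcard : (Finset.univ : Finset (Fin n)).card = n := by simp
  calc (fam (Finset.univ : Finset (Fin n))).card ≤ fbound n := main_bound n _ hcard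
    _ ≤ (4*n)^n := fbound_le n hn
end

section
/- Let G = (V, E) be a finite simple graph with edge weights w : E → ℝ, w(e) ≥ 0, let M ⊆ E be a matching with w(M) = Σ_{e ∈ M} w(e) > 0, let ε ∈ (0,1), and let R ≥ 1 be an integer. For each r ∈ {1, …, R}, let (y^{(r)}, z^{(r)}) be nonnegative with z^{(r)}_S = 0 whenever |S| is even, and suppose its value |(y^{(r)}, z^{(r)})| is strictly less than (1 − ε)·w(M). For each edge e ∈ M let c(e) = #{r : e is violated by (y^{(r)}, z^{(r)})}. Then there exists an edge e ∈ M with c(e) ≥ ε·R. -/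
open Finset
open scoped Classical

/-- The pair `(y, z)` covers the edge `e = s(u, v)` of weight `w e`, i.e.
`y u + y v + ∑_{S : u ∈ S and v ∈ S} z S ≥ w e`. -/
def CoversEdge {V : Type*} [Fintype V] [DecidableEq V]
    (w : Sym2 V → ℝ) (y : V → ℝ) (z : Finset V → ℝ) (e : Sym2 V) : Prop :=
  ∀ u v : V, e = s(u, v) →
    w e ≤ y u + y v +
      ∑ S ∈ Finset.univ.filter (fun S : Finset V => u ∈ S ∧ v ∈ S), z S

lemma cover_sum_bound {V : Type*} [Fintype V] [DecidableEq V]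
    (w : Sym2 V → ℝ) (y : V → ℝ) (z : Finset V → ℝ) (C : Finset (Sym2 V))
    (hnd : ∀ e ∈ C, ¬ e.IsDiag)
    (hdisj : ∀ e ∈ C, ∀ f ∈ C, e ≠ f → ∀ v, v ∈ e → v ∉ f)
    (hcov : ∀ e ∈ C, CoversEdge w y z e)
    (hy : ∀ v, 0 ≤ y v) (hz : ∀ S, 0 ≤ z S)
    (hzodd : ∀ S : Finset V, Even S.card → z S = 0) :
    ∑ e ∈ C, w e ≤ (∑ v : V, y v) + ∑ S : Finset V, ((S.card : ℝ) - 1) / 2 * z S := by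
  set F : Sym2 V → Finset V := fun e => univ.filter (· ∈ e) with hF
  -- basic facts about F on non-diagonal edges
  have hFab : ∀ a b : V, F s(a, b) = {a, b} := by
    intro a b
    ext v
    simp [hF, Sym2.mem_iff, or_comm]
  have hFcard : ∀ e ∈ C, (F e).card = 2 := by
    intro e he
    induction e using Sym2.ind with
    | _ a b =>
      have hab : a ≠ b := by simpa [Sym2.mk_isDiag_iff] using hnd _ he
      rw [hFab]; exact card_pair hab
  -- pointwise bound
  have hpt : ∀ e ∈ C, w e ≤ (∑ v ∈ F e, y v) +
      ∑ S ∈ univ.filter (fun S : Finset V => F e ⊆ S), z S := by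
    intro e he
    induction e using Sym2.ind with
    | _ a b =>
      have hab : a ≠ b := by simpa [Sym2.mk_isDiag_iff] using hnd _ he
      have h1 : ∑ v ∈ F s(a, b), y v = y a + y b := by
        rw [hFab]; exact sum_pair hab
      have h2 : univ.filter (fun S : Finset V => F s(a, b) ⊆ S)
          = univ.filter (fun S : Finset V => a ∈ S ∧ b ∈ S) := by
        apply filter_congr
        intro S _
        simp [hFab, insert_subset_iff]
      rw [h1, h2]
      exact hcov _ he a b rfl
  have hFdisj : (C : Set (Sym2 V)).PairwiseDisjoint F := by
    intro e he f hf hne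
    simp only [Function.onFun]
    rw [Finset.disjoint_left]
    intro v hv hv'
    exact hdisj e (by simpa using he) f (by simpa using hf) hne v
      (by simpa [hF] using hv) (by simpa [hF] using hv')
  calc ∑ e ∈ C, w e
      ≤ ∑ e ∈ C, ((∑ v ∈ F e, y v) +
          ∑ S ∈ univ.filter (fun S : Finset V => F e ⊆ S), z S) := sum_le_sum hpt
    _ = (∑ e ∈ C, ∑ v ∈ F e, y v) +
          ∑ e ∈ C, ∑ S ∈ univ.filter (fun S : Finset V => F e ⊆ S), z S := sum_add_distrib
    _ ≤ (∑ v : V, y v) + ∑ S : Finset V, ((S.card : ℝ) - 1) / 2 * z S := by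
        gcongr
        · -- vertex part
          rw [← Finset.sum_biUnion hFdisj]
          exact sum_le_sum_of_subset_of_nonneg (subset_univ _) (fun v _ _ => hy v)
        · -- set part
          have hswap : ∑ e ∈ C, ∑ S ∈ univ.filter (fun S : Finset V => F e ⊆ S), z S
              = ∑ S : Finset V, ((C.filter (fun e => F e ⊆ S)).card : ℝ) * z S := by
            simp_rw [sum_filter]
            rw [Finset.sum_comm]
            refine Finset.sum_congr rfl fun S _ => ?_
            rw [← sum_filter, sum_const, nsmul_eq_mul]
          rw [hswap]
          refine sum_le_sum fun S _ => ?_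
          rcases Nat.even_or_odd S.card with hev | hodd
          · rw [hzodd S hev]; simp
          · -- counting: 2 * k + 1 ≤ S.card
            set D := C.filter (fun e => F e ⊆ S) with hD
            have hDC : D ⊆ C := filter_subset _ _
            have hsub : D.biUnion F ⊆ S := by
              intro v hv
              rcases Finset.mem_biUnion.mp hv with ⟨e, he, hve⟩
              exact (mem_filter.mp he).2 hve
            have hcard : (D.biUnion F).card = 2 * D.card := by
              rw [Finset.card_biUnion (fun e he f hf hne => hFdisj (by simp [hDC he])
                (by simp [hDC hf]) hne)]
              rw [Finset.sum_congr rfl (fun e he => hFcard e (hDC he)), sum_const,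
                smul_eq_mul, mul_comm]
            have h2k : 2 * D.card ≤ S.card := hcard ▸ card_le_card hsub
            have h2k1 : 2 * D.card + 1 ≤ S.card := by
              rcases Nat.lt_or_ge (2 * D.card) S.card with h | h
              · omega
              · exfalso
                have : 2 * D.card = S.card := le_antisymm h2k h
                rw [← this] at hodd
                exact (Nat.not_odd_iff_even.mpr ⟨D.card, by ring⟩) hodd
            have hk : (D.card : ℝ) ≤ ((S.card : ℝ) - 1) / 2 := by
              rw [le_div_iff₀ (by norm_num : (0:ℝ) < 2)]
              have := (Nat.cast_le (α := ℝ)).mpr h2k1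
              push_cast at this
              linarith
            exact mul_le_mul_of_nonneg_right hk (hz S)

/-- If in each of `R` rounds the nonnegative pair `(y^{(r)}, z^{(r)})` (with
`z^{(r)}` supported on odd-cardinality sets) has value strictly less than `(1 - ε)·w(M)` for a
matching `M` of positive weight, then some edge of `M` is violated in at least `ε·R` rounds. -/
theorem stmt_13 {V : Type*} [Fintype V] [DecidableEq V] (G : SimpleGraph V)
    (w : Sym2 V → ℝ) (hw : ∀ e ∈ G.edgeSet, 0 ≤ w e)
    (M : Finset (Sym2 V))
    (hME : ∀ e ∈ M, e ∈ G.edgeSet)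
    (hMdisj : ∀ e ∈ M, ∀ f ∈ M, e ≠ f → ∀ v, v ∈ e → v ∉ f)
    (hMpos : 0 < ∑ e ∈ M, w e)
    (ε : ℝ) (hε0 : 0 < ε) (hε1 : ε < 1)
    (R : ℕ) (hR : 1 ≤ R)
    (y : ℕ → V → ℝ) (z : ℕ → Finset V → ℝ)
    (hy : ∀ r ∈ Finset.Icc 1 R, ∀ v, 0 ≤ y r v)
    (hz : ∀ r ∈ Finset.Icc 1 R, ∀ S, 0 ≤ z r S)
    (hzodd : ∀ r ∈ Finset.Icc 1 R, ∀ S : Finset V, Even S.card → z r S = 0)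
    (hval : ∀ r ∈ Finset.Icc 1 R,
      (∑ v : V, y r v) + ∑ S : Finset V, ((S.card : ℝ) - 1) / 2 * z r S <
        (1 - ε) * ∑ e ∈ M, w e)
    (c : Sym2 V → ℕ)
    (hc : ∀ e ∈ M, c e =
      ((Finset.Icc 1 R).filter (fun r => ¬ CoversEdge w (y r) (z r) e)).card) :
    ∃ e ∈ M, ε * R ≤ (c e : ℝ) := by
  set W := ∑ e ∈ M, w e with hW
  have hwM : ∀ e ∈ M, 0 ≤ w e := fun e he => hw e (hME e he)
  -- per-round: violated weight exceeds ε W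
  have key : ∀ r ∈ Finset.Icc 1 R,
      ε * W < ∑ e ∈ M.filter (fun e => ¬ CoversEdge w (y r) (z r) e), w e := by
    intro r hr
    have hcovsum : ∑ e ∈ M.filter (fun e => CoversEdge w (y r) (z r) e), w e <
        (1 - ε) * W := by
      refine lt_of_le_of_lt ?_ (hval r hr)
      exact cover_sum_bound w (y r) (z r) _
        (fun e he => G.not_isDiag_of_mem_edgeSet (hME e (filter_subset _ _ he)))
        (fun e he f hf => hMdisj e (filter_subset _ _ he) f (filter_subset _ _ hf))
        (fun e he => (mem_filter.mp he).2) (hy r hr) (hz r hr) (hzodd r hr)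
    have hsplit := Finset.sum_filter_add_sum_filter_not M
      (fun e => CoversEdge w (y r) (z r) e) w
    rw [← hW] at hsplit
    linarith
  -- the weighted count identity
  have hsum : ∑ e ∈ M, w e * (c e : ℝ)
      = ∑ r ∈ Finset.Icc 1 R,
          ∑ e ∈ M.filter (fun e => ¬ CoversEdge w (y r) (z r) e), w e := by
    calc ∑ e ∈ M, w e * (c e : ℝ)
        = ∑ e ∈ M, ∑ r ∈ (Finset.Icc 1 R).filter
            (fun r => ¬ CoversEdge w (y r) (z r) e), w e := by
          refine Finset.sum_congr rfl fun e he => ?_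
          rw [hc e he, sum_const, nsmul_eq_mul, mul_comm]
      _ = ∑ e ∈ M, ∑ r ∈ Finset.Icc 1 R,
            if ¬ CoversEdge w (y r) (z r) e then w e else 0 := by
          refine Finset.sum_congr rfl fun e _ => ?_
          rw [sum_filter]
      _ = ∑ r ∈ Finset.Icc 1 R, ∑ e ∈ M,
            if ¬ CoversEdge w (y r) (z r) e then w e else 0 := Finset.sum_comm
      _ = ∑ r ∈ Finset.Icc 1 R,
            ∑ e ∈ M.filter (fun e => ¬ CoversEdge w (y r) (z r) e), w e := by
          refine Finset.sum_congr rfl fun r _ => ?_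
          rw [sum_filter]
  have hne : (Finset.Icc 1 R).Nonempty := by
    rw [Finset.nonempty_Icc]; exact hR
  have hbig : (R : ℝ) * (ε * W) < ∑ e ∈ M, w e * (c e : ℝ) := by
    rw [hsum]
    have := Finset.sum_lt_sum_of_nonempty hne key
    simpa [Nat.card_Icc, mul_comm] using this
  by_contra h
  push_neg at h
  have hsmall : ∑ e ∈ M, w e * (c e : ℝ) ≤ ∑ e ∈ M, w e * (ε * R) :=
    Finset.sum_le_sum fun e he =>
      mul_le_mul_of_nonneg_left (le_of_lt (h e he)) (hwM e he)
  rw [← Finset.sum_mul, ← hW] at hsmall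
  nlinarith
end

section
/- Let G = (V, E) be a finite simple graph with integer edge weights w : E → ℤ, w(e) ≥ 1 for all e, set W = Σ_{e ∈ E} w(e) ≥ 1, let M ⊆ E be a matching, let ε ∈ (0,1), and let R ≥ 1 be an integer with ε·R ≥ 4·log₂ W. For each r ∈ {1, …, R}, let (y^{(r)}, z^{(r)}) be nonnegative with z^{(r)}_S = 0 whenever |S| is even; let F_r ⊆ E be the set of edges of G violated by (y^{(r)}, z^{(r)}); define q^{(1)}_e = 1 and q^{(r+1)}_e = 2·q^{(r)}_e if e ∈ F_r, q^{(r+1)}_e = q^{(r)}_e otherwise, with Q^{(r)} = Σ_{e ∈ E} w(e)·q^{(r)}_e. If for every r we have Σ_{e ∈ F_r} w(e)·q^{(r)}_e ≤ (ε/2)·Q^{(r)}, then there exists r ∈ {1, …, R} with value |(y^{(r)}, z^{(r)})| ≥ (1 − ε)·w(M). -/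
open Finset
open scoped Classical

lemma cover_value_bound {V : Type*} [Fintype V] [DecidableEq V]
    (G : SimpleGraph V) (w : Sym2 V → ℝ) (y : V → ℝ) (z : Finset V → ℝ)
    (hy : ∀ v, 0 ≤ y v) (hz : ∀ S, 0 ≤ z S)
    (hzodd : ∀ S : Finset V, Even S.card → z S = 0)
    (C : Finset (Sym2 V))
    (hCE : ∀ e ∈ C, e ∈ G.edgeSet)
    (hCdisj : ∀ e ∈ C, ∀ f ∈ C, e ≠ f → ∀ v, v ∈ e → v ∉ f)
    (hcov : ∀ e ∈ C, CoversEdge w y z e) :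
    ∑ e ∈ C, w e ≤ (∑ v : V, y v) + ∑ S : Finset V, ((S.card : ℝ) - 1) / 2 * z S := by
  set a : Sym2 V → V := fun e => e.out.1 with ha
  set b : Sym2 V → V := fun e => e.out.2 with hb
  have hrep : ∀ e : Sym2 V, e = s(a e, b e) := by
    intro e
    show e = Sym2.mk e.out.1 e.out.2
    rw [Sym2.mk, Prod.mk.eta, e.out_eq]
  have hne : ∀ e ∈ C, a e ≠ b e := by
    intro e he hab
    exact G.not_isDiag_of_mem_edgeSet (hCE e he) (by rw [hrep e]; exact Sym2.mk_isDiag_iff.2 hab)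
  have hmem : ∀ e : Sym2 V, ∀ x : V, x ∈ ({a e, b e} : Finset V) ↔ x ∈ e := by
    intro e x
    rw [Finset.mem_insert, Finset.mem_singleton]
    conv_rhs => rw [hrep e]
    exact (Sym2.mem_iff).symm
  -- pairwise disjoint vertex pairs
  have hPdisj : ∀ e ∈ C, ∀ f ∈ C, e ≠ f →
      Disjoint ({a e, b e} : Finset V) ({a f, b f} : Finset V) := by
    intro e he f hf hef
    rw [Finset.disjoint_left]
    intro x hxe hxf
    exact hCdisj e he f hf hef x ((hmem e x).1 hxe) ((hmem f x).1 hxf)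
  -- step 1 : apply the cover inequality edge by edge
  have step1 : ∑ e ∈ C, w e ≤
      (∑ e ∈ C, (y (a e) + y (b e))) +
      ∑ e ∈ C, ∑ S ∈ Finset.univ.filter (fun S : Finset V => a e ∈ S ∧ b e ∈ S), z S := by
    rw [← Finset.sum_add_distrib]
    exact Finset.sum_le_sum fun e he => hcov e he (a e) (b e) (hrep e)
  -- y part
  have ypart : ∑ e ∈ C, (y (a e) + y (b e)) ≤ ∑ v : V, y v := by
    have h1 : ∀ e ∈ C, y (a e) + y (b e) = ∑ x ∈ ({a e, b e} : Finset V), y x := by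
      intro e he; rw [Finset.sum_pair (hne e he)]
    rw [Finset.sum_congr rfl h1,
      ← Finset.sum_biUnion (fun e he f hf hef => hPdisj e he f hf hef)]
    exact Finset.sum_le_sum_of_subset_of_nonneg (Finset.subset_univ _) fun x _ _ => hy x
  -- z part
  have zpart : (∑ e ∈ C, ∑ S ∈ Finset.univ.filter (fun S : Finset V => a e ∈ S ∧ b e ∈ S), z S)
      ≤ ∑ S : Finset V, ((S.card : ℝ) - 1) / 2 * z S := by
    have swap : (∑ e ∈ C, ∑ S ∈ Finset.univ.filter (fun S : Finset V => a e ∈ S ∧ b e ∈ S), z S)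
        = ∑ S : Finset V, ((C.filter (fun e => a e ∈ S ∧ b e ∈ S)).card : ℝ) * z S := by
      have h1 : ∀ e ∈ C, (∑ S ∈ Finset.univ.filter (fun S : Finset V => a e ∈ S ∧ b e ∈ S), z S)
          = ∑ S : Finset V, if a e ∈ S ∧ b e ∈ S then z S else 0 := by
        intro e _; rw [Finset.sum_filter]
      rw [Finset.sum_congr rfl h1, Finset.sum_comm]
      refine Finset.sum_congr rfl fun S _ => ?_
      rw [← Finset.sum_filter, Finset.sum_const, nsmul_eq_mul]
    rw [swap]
    refine Finset.sum_le_sum fun S _ => ?_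
    rcases Nat.even_or_odd S.card with hpar | hpar
    · rw [hzodd S hpar, mul_zero, mul_zero]
    · -- odd case : the count is at most (|S|-1)/2
      set C' := C.filter (fun e => a e ∈ S ∧ b e ∈ S) with hC'
      have hsub : C' ⊆ C := Finset.filter_subset _ _
      have hcard2 : ∀ e ∈ C', ({a e, b e} : Finset V).card = 2 := by
        intro e he; exact Finset.card_pair (hne e (hsub he))
      have hbU : C'.biUnion (fun e => ({a e, b e} : Finset V)) ⊆ S := by
        intro x hx
        rcases Finset.mem_biUnion.1 hx with ⟨e, he, hxe⟩
        have hprop := (Finset.mem_filter.1 he).2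
        rcases Finset.mem_insert.1 hxe with h | h
        · rw [h]; exact hprop.1
        · rw [Finset.mem_singleton.1 h]; exact hprop.2
      have hcount : 2 * C'.card ≤ S.card := by
        have h1 : (C'.biUnion (fun e => ({a e, b e} : Finset V))).card = 2 * C'.card := by
          rw [Finset.card_biUnion (fun e he f hf hef => hPdisj e (hsub he) f (hsub hf) hef),
            Finset.sum_congr rfl hcard2, Finset.sum_const, smul_eq_mul, mul_comm]
        rw [← h1]
        exact Finset.card_le_card hbU
      have hcount' : 2 * C'.card + 1 ≤ S.card := by
        rcases hpar with ⟨m, hm⟩; omega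
      have : (C'.card : ℝ) ≤ ((S.card : ℝ) - 1) / 2 := by
        have := (Nat.cast_le (α := ℝ)).2 hcount'
        push_cast at this
        linarith
      exact mul_le_mul_of_nonneg_right this (hz S)
  linarith

/-- Deterministic core of Theorem 4.2: integer weights `w ≥ 1` with total
weight `W`, matching `M`, rounds `r = 1, …, R` with `ε·R ≥ 4·log₂ W`, nonnegative odd-set
covers `(y^{(r)}, z^{(r)})`, violated edge sets `F_r`, importances doubled on violated edges.
If in every round `∑_{e ∈ F_r} w e·q^{(r)}_e ≤ (ε/2)·Q^{(r)}`, then some `(y^{(r)}, z^{(r)})`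
has value at least `(1 - ε)·w(M)`. -/
theorem stmt_14 {V : Type*} [Fintype V] [DecidableEq V]
    (G : SimpleGraph V) [Fintype G.edgeSet]
    (w : Sym2 V → ℤ) (hw : ∀ e ∈ G.edgeFinset, 1 ≤ w e)
    (W : ℤ) (hWdef : W = ∑ e ∈ G.edgeFinset, w e) (hW1 : 1 ≤ W)
    (M : Finset (Sym2 V))
    (hME : ∀ e ∈ M, e ∈ G.edgeSet)
    (hMdisj : ∀ e ∈ M, ∀ f ∈ M, e ≠ f → ∀ v, v ∈ e → v ∉ f)
    (ε : ℝ) (hε0 : 0 < ε) (hε1 : ε < 1)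
    (R : ℕ) (hR : 1 ≤ R)
    (hεR : 4 * Real.logb 2 (W : ℝ) ≤ ε * R)
    (y : ℕ → V → ℝ) (z : ℕ → Finset V → ℝ)
    (hy : ∀ r ∈ Finset.Icc 1 R, ∀ v, 0 ≤ y r v)
    (hz : ∀ r ∈ Finset.Icc 1 R, ∀ S, 0 ≤ z r S)
    (hzodd : ∀ r ∈ Finset.Icc 1 R, ∀ S : Finset V, Even S.card → z r S = 0)
    (F : ℕ → Finset (Sym2 V))
    (hF : ∀ r, F r = G.edgeFinset.filter
      (fun e => ¬ CoversEdge (fun e' => (w e' : ℝ)) (y r) (z r) e))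
    (q : ℕ → Sym2 V → ℝ)
    (hq1 : ∀ e, q 1 e = 1)
    (hqstep : ∀ r ∈ Finset.Icc 1 R, ∀ e,
      q (r + 1) e = if e ∈ F r then 2 * q r e else q r e)
    (Q : ℕ → ℝ) (hQ : ∀ r, Q r = ∑ e ∈ G.edgeFinset, (w e : ℝ) * q r e)
    (hsmall : ∀ r ∈ Finset.Icc 1 R, ∑ e ∈ F r, (w e : ℝ) * q r e ≤ (ε / 2) * Q r) :
    ∃ r ∈ Finset.Icc 1 R,
      (1 - ε) * (∑ e ∈ M, (w e : ℝ)) ≤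
        (∑ v : V, y r v) + ∑ S : Finset V, ((S.card : ℝ) - 1) / 2 * z r S := by
  by_contra hcon
  push_neg at hcon
  set wM : ℝ := ∑ e ∈ M, (w e : ℝ) with hwM
  have hMsub : M ⊆ G.edgeFinset := fun e he => SimpleGraph.mem_edgeFinset.2 (hME e he)
  -- Step A: in every round the violated matching edges have weight more than ε·wM
  have stepA : ∀ r ∈ Finset.Icc 1 R,
      ε * wM < ∑ e ∈ M.filter (· ∈ F r), (w e : ℝ) := by
    intro r hr
    have hcov : ∀ e ∈ M.filter (· ∉ F r),
        CoversEdge (fun e' => (w e' : ℝ)) (y r) (z r) e := by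
      intro e he
      rcases Finset.mem_filter.1 he with ⟨heM, heF⟩
      by_contra hnc
      exact heF (by rw [hF r]; exact Finset.mem_filter.2 ⟨hMsub heM, hnc⟩)
    have h1 : ∑ e ∈ M.filter (· ∉ F r), (w e : ℝ) ≤
        (∑ v : V, y r v) + ∑ S : Finset V, ((S.card : ℝ) - 1) / 2 * z r S :=
      cover_value_bound G (fun e' => (w e' : ℝ)) (y r) (z r) (hy r hr) (hz r hr)
        (hzodd r hr) (M.filter (· ∉ F r))
        (fun e he => hME e (Finset.filter_subset _ _ he))
        (fun e he f hf hef => hMdisj e (Finset.filter_subset _ _ he) f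
          (Finset.filter_subset _ _ hf) hef)
        hcov
    have h2 := hcon r hr
    have hsplit : (∑ e ∈ M.filter (· ∈ F r), (w e : ℝ)) +
        ∑ e ∈ M.filter (· ∉ F r), (w e : ℝ) = wM :=
      Finset.sum_filter_add_sum_filter_not M _ _
    linarith
  -- Step B: explicit formula for the importances
  have hqf : ∀ n, n ≤ R → ∀ e, q (n + 1) e =
      (2 : ℝ) ^ (((Finset.Icc 1 n).filter (fun r => e ∈ F r)).card) := by
    intro n
    induction n with
    | zero => intro _ e; simpa using hq1 e
    | succ m ih =>
      intro hm e
      have hmem : m + 1 ∈ Finset.Icc 1 R := Finset.mem_Icc.2 ⟨Nat.succ_le_succ (Nat.zero_le m), hm⟩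
      have hIcc : Finset.Icc 1 (m + 1) = insert (m + 1) (Finset.Icc 1 m) := by
        ext x; simp only [Finset.mem_Icc, Finset.mem_insert]; omega
      have hnotmem : m + 1 ∉ Finset.Icc 1 m := by simp
      rw [hqstep (m + 1) hmem e, ih (Nat.le_of_succ_le hm) e, hIcc, Finset.filter_insert]
      by_cases hFe : e ∈ F (m + 1)
      · rw [if_pos hFe, if_pos hFe, Finset.card_insert_of_notMem
          (fun hc => hnotmem (Finset.filter_subset _ _ hc))]
        ring
      · rw [if_neg hFe, if_neg hFe]
  -- Step D: Q grows slowly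
  have hQ1W : Q 1 = (W : ℝ) := by
    rw [hQ 1, hWdef]
    push_cast
    exact Finset.sum_congr rfl fun e _ => by rw [hq1 e, mul_one]
  have hFsub : ∀ r, F r ⊆ G.edgeFinset := by
    intro r; rw [hF r]; exact Finset.filter_subset _ _
  have hQstep : ∀ r ∈ Finset.Icc 1 R, Q (r + 1) ≤ (1 + ε / 2) * Q r := by
    intro r hr
    have h1 : Q (r + 1) = Q r + ∑ e ∈ F r, (w e : ℝ) * q r e := by
      rw [hQ (r + 1), hQ r]
      have h2 : ∀ e ∈ G.edgeFinset, (w e : ℝ) * q (r + 1) e =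
          (w e : ℝ) * q r e + (if e ∈ F r then (w e : ℝ) * q r e else 0) := by
        intro e _
        rw [hqstep r hr e]
        by_cases hFe : e ∈ F r
        · rw [if_pos hFe, if_pos hFe]; ring
        · rw [if_neg hFe, if_neg hFe]; ring
      rw [Finset.sum_congr rfl h2, Finset.sum_add_distrib,
        Finset.sum_ite_mem, Finset.inter_eq_right.2 (hFsub r)]
    have h3 := hsmall r hr
    rw [h1]; linarith
  have hQbound : ∀ n ≤ R, Q (n + 1) ≤ (1 + ε / 2) ^ n * (W : ℝ) := by
    intro n
    induction n with
    | zero => intro _; simp [hQ1W]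
    | succ m ih =>
      intro hm
      have hmem : m + 1 ∈ Finset.Icc 1 R := Finset.mem_Icc.2 ⟨Nat.succ_le_succ (Nat.zero_le m), hm⟩
      calc Q (m + 1 + 1) ≤ (1 + ε / 2) * Q (m + 1) := hQstep (m + 1) hmem
        _ ≤ (1 + ε / 2) * ((1 + ε / 2) ^ m * (W : ℝ)) :=
            mul_le_mul_of_nonneg_left (ih (Nat.le_of_succ_le hm)) (by linarith)
        _ = (1 + ε / 2) ^ (m + 1) * (W : ℝ) := by ring
  -- Step C: some matching edge is violated more than εR times
  set k : Sym2 V → ℕ := fun e => ((Finset.Icc 1 R).filter (fun r => e ∈ F r)).card with hk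
  have hksum : ε * R * wM < ∑ e ∈ M, (w e : ℝ) * (k e : ℝ) := by
    have h1 : ε * R * wM = ∑ _r ∈ Finset.Icc 1 R, ε * wM := by
      rw [Finset.sum_const, Nat.card_Icc]
      simp only [Nat.add_sub_cancel, nsmul_eq_mul]
      ring
    have h2 : (∑ r ∈ Finset.Icc 1 R, ε * wM) <
        ∑ r ∈ Finset.Icc 1 R, ∑ e ∈ M.filter (· ∈ F r), (w e : ℝ) := by
      refine Finset.sum_lt_sum_of_nonempty ?_ stepA
      exact ⟨1, Finset.mem_Icc.2 ⟨le_refl 1, hR⟩⟩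
    have h3 : (∑ r ∈ Finset.Icc 1 R, ∑ e ∈ M.filter (· ∈ F r), (w e : ℝ)) =
        ∑ e ∈ M, (w e : ℝ) * (k e : ℝ) := by
      have h4 : ∀ r ∈ Finset.Icc 1 R, (∑ e ∈ M.filter (· ∈ F r), (w e : ℝ)) =
          ∑ e ∈ M, if e ∈ F r then (w e : ℝ) else 0 := by
        intro r _; rw [Finset.sum_filter]
      rw [Finset.sum_congr rfl h4, Finset.sum_comm]
      refine Finset.sum_congr rfl fun e _ => ?_
      rw [← Finset.sum_filter, Finset.sum_const, nsmul_eq_mul, mul_comm]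
    rw [h1, ← h3]; exact h2
  have hwM0 : ∀ e ∈ M, (0 : ℝ) ≤ (w e : ℝ) := by
    intro e he
    have h := hw e (hMsub he)
    exact_mod_cast le_trans zero_le_one h
  have hex : ∃ e ∈ M, ε * R < (k e : ℝ) := by
    by_contra hno
    push_neg at hno
    have : (∑ e ∈ M, (w e : ℝ) * (k e : ℝ)) ≤ ∑ e ∈ M, (w e : ℝ) * (ε * R) :=
      Finset.sum_le_sum fun e he => mul_le_mul_of_nonneg_left (hno e he) (hwM0 e he)
    rw [← Finset.sum_mul] at this
    rw [hwM] at hksum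
    nlinarith
  obtain ⟨e₀, he₀M, hke₀⟩ := hex
  -- Final contradiction via the growth of q (R+1) e₀
  have he₀E : e₀ ∈ G.edgeFinset := hMsub he₀M
  have hq0 : ∀ e ∈ G.edgeFinset, (0:ℝ) ≤ (w e : ℝ) * q (R + 1) e := by
    intro e he
    rw [hqf R le_rfl e]
    have h := hw e he
    have : (0:ℝ) ≤ (w e : ℝ) := by exact_mod_cast le_trans zero_le_one h
    positivity
  have hsingle : (w e₀ : ℝ) * q (R + 1) e₀ ≤ Q (R + 1) := by
    rw [hQ (R + 1)]
    exact Finset.single_le_sum hq0 he₀E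
  have hqe₀ : (2 : ℝ) ^ (ε * R) < (w e₀ : ℝ) * q (R + 1) e₀ := by
    have h1 : (2 : ℝ) ^ (ε * R) < (2 : ℝ) ^ ((k e₀ : ℕ) : ℝ) :=
      (Real.rpow_lt_rpow_left_iff one_lt_two).2 hke₀
    have h2 : (2 : ℝ) ^ ((k e₀ : ℕ) : ℝ) = (2 : ℝ) ^ (k e₀ : ℕ) := Real.rpow_natCast 2 (k e₀)
    have h3 : q (R + 1) e₀ = (2 : ℝ) ^ (k e₀ : ℕ) := hqf R le_rfl e₀
    have h4 : (1 : ℝ) ≤ (w e₀ : ℝ) := by exact_mod_cast hw e₀ he₀E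
    have h5 : (0:ℝ) < (2 : ℝ) ^ (k e₀ : ℕ) := by positivity
    calc (2 : ℝ) ^ (ε * R) < (2 : ℝ) ^ (k e₀ : ℕ) := by rw [← h2]; exact h1
      _ = 1 * (2 : ℝ) ^ (k e₀ : ℕ) := (one_mul _).symm
      _ ≤ (w e₀ : ℝ) * q (R + 1) e₀ := by rw [h3]; exact mul_le_mul_of_nonneg_right h4 h5.le
  -- upper bound : (1+ε/2)^R * W ≤ 2^(εR)
  have hub : ((1 : ℝ) + ε / 2) ^ R * (W : ℝ) ≤ (2 : ℝ) ^ (ε * R) := by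
    have hWpos : (0 : ℝ) < (W : ℝ) := by exact_mod_cast hW1.trans_lt' (by norm_num)
    have hlogb : Real.logb 2 (W : ℝ) ≤ ε * R / 4 := by linarith
    have hW2 : (W : ℝ) ≤ (2 : ℝ) ^ (ε * R / 4) := by
      calc (W : ℝ) = (2 : ℝ) ^ (Real.logb 2 (W : ℝ)) :=
            (Real.rpow_logb (by norm_num) (by norm_num) hWpos).symm
        _ ≤ (2 : ℝ) ^ (ε * R / 4) := Real.rpow_le_rpow_of_exponent_le one_le_two hlogb
    have hbase : (1 : ℝ) + ε / 2 ≤ (2 : ℝ) ^ ((3 : ℝ) * ε / 4) := by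
      have he : (1 : ℝ) + ε / 2 ≤ Real.exp (ε / 2) := by
        have := Real.add_one_le_exp (ε / 2); linarith
      have hlog : (ε / 2 : ℝ) ≤ 3 * ε / 4 * Real.log 2 := by
        have h2 := Real.log_two_gt_d9
        nlinarith
      calc (1 : ℝ) + ε / 2 ≤ Real.exp (ε / 2) := he
        _ ≤ Real.exp (3 * ε / 4 * Real.log 2) := Real.exp_le_exp.2 hlog
        _ = Real.exp (Real.log 2 * (3 * ε / 4)) := by rw [mul_comm]
        _ = (2 : ℝ) ^ ((3 : ℝ) * ε / 4) := (Real.rpow_def_of_pos (by norm_num) _).symm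
    have hpow : ((1 : ℝ) + ε / 2) ^ R ≤ (2 : ℝ) ^ ((3 : ℝ) * ε / 4 * R) := by
      calc ((1 : ℝ) + ε / 2) ^ R ≤ ((2 : ℝ) ^ ((3 : ℝ) * ε / 4)) ^ R :=
            pow_le_pow_left₀ (by linarith) hbase R
        _ = (2 : ℝ) ^ ((3 : ℝ) * ε / 4 * R) := by
            rw [← Real.rpow_natCast ((2:ℝ) ^ ((3:ℝ) * ε / 4)) R, ← Real.rpow_mul (by norm_num)]
    calc ((1 : ℝ) + ε / 2) ^ R * (W : ℝ) ≤
          (2 : ℝ) ^ ((3 : ℝ) * ε / 4 * R) * (2 : ℝ) ^ (ε * R / 4) := by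
          refine mul_le_mul hpow hW2 hWpos.le (by positivity)
      _ = (2 : ℝ) ^ ((3 : ℝ) * ε / 4 * R + ε * R / 4) := (Real.rpow_add (by norm_num) _ _).symm
      _ = (2 : ℝ) ^ (ε * R) := by ring_nf
    -- done
  have hfinal := hQbound R le_rfl
  linarith
end

section
/- Let V be a finite set with |V| = n > 4, E a finite set of edges on V, w : E → ℤ with w(e) ≥ 1, let W ≥ 2 be an integer with W ≥ Σ_{e ∈ E} w(e), let q : E → ℝ with q_e > 0, Q = Σ_{e ∈ E} q_e·w(e), and ε ∈ (0,1). Sample a random subset S ⊆ E by including each edge e independently with probability p_e = min(1, (8n·ln(nW)/ε)·q_e·w(e)/Q). Let C be the class of pairs (y, z) where y : V → {0, 1, …, W} and z assigns values in {0, 1, …, W} to subsets of V such that the support {S ⊆ V : z_S > 0} is a laminar family of odd-cardinality subsets. Then the probability that there exists (y, z) ∈ C which covers every edge of S but satisfies Σ_{e ∈ E violated by (y,z)} q_e·w(e) > (ε/2)·Q is at most (nW)^{−n}. -/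
open Finset
open scoped Classical

set_option linter.unusedSectionVars false
set_option maxHeartbeats 1000000

/-- The integer-valued pair `(y, z)` covers the edge `e = s(u, v)` of weight `w e`, i.e.
`y u + y v + ∑_{S : u ∈ S and v ∈ S} z S ≥ w e`. -/
def CoversEdgeNat {V : Type*} [Fintype V] [DecidableEq V]
    (w : Sym2 V → ℤ) (y : V → ℕ) (z : Finset V → ℕ) (e : Sym2 V) : Prop :=
  ∀ u v : V, e = s(u, v) →
    (w e : ℝ) ≤ (y u : ℝ) + (y v : ℝ) +
      ∑ S ∈ Finset.univ.filter (fun S : Finset V => u ∈ S ∧ v ∈ S), (z S : ℝ)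

section Laminar
variable {V : Type*} [Fintype V] [DecidableEq V]

lemma exists_min_subset (S : Finset (Finset V)) (hne : S.Nonempty)
    (hcomp : ∀ A ∈ S, ∀ B ∈ S, A ⊆ B ∨ B ⊆ A) : ∃ A ∈ S, ∀ B ∈ S, A ⊆ B := by
  obtain ⟨A, hA, hmin⟩ := S.exists_min_image Finset.card hne
  refine ⟨A, hA, fun B hB => ?_⟩
  rcases hcomp A hA B hB with h | h
  · exact h
  · exact le_of_eq (Finset.eq_of_subset_of_card_le h (hmin B hB)).symm

def maxSets (G : Finset (Finset V)) : Finset (Finset V) :=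
  G.filter (fun A => ∀ B ∈ G, ¬ A ⊂ B)

lemma maxSets_subset (G : Finset (Finset V)) : maxSets G ⊆ G := Finset.filter_subset _ _

lemma exists_maximal_superset (G : Finset (Finset V)) {A} (hA : A ∈ G) :
    ∃ M ∈ maxSets G, A ⊆ M := by
  obtain ⟨M, hM, hmax⟩ := (G.filter (fun B => A ⊆ B)).exists_max_image Finset.card
    ⟨A, by simp [hA]⟩
  refine ⟨M, ?_, (Finset.mem_filter.mp hM).2⟩
  rw [maxSets, Finset.mem_filter]
  refine ⟨(Finset.mem_filter.mp hM).1, fun B hB hMB => ?_⟩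
  have hBmem : B ∈ G.filter (fun B => A ⊆ B) :=
    Finset.mem_filter.mpr ⟨hB, (Finset.mem_filter.mp hM).2.trans hMB.subset⟩
  exact absurd (hmax B hBmem) (not_le.mpr (Finset.card_lt_card hMB))

lemma maxSets_disjoint (G : Finset (Finset V))
    (hlam : ∀ A ∈ G, ∀ B ∈ G, A ∩ B = ∅ ∨ A ⊆ B ∨ B ⊆ A)
    {M₁ M₂ : Finset V} (h₁ : M₁ ∈ maxSets G) (h₂ : M₂ ∈ maxSets G) (hne : M₁ ≠ M₂) :
    Disjoint M₁ M₂ := by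
  obtain ⟨hm₁, hmax₁⟩ := Finset.mem_filter.mp h₁
  obtain ⟨hm₂, hmax₂⟩ := Finset.mem_filter.mp h₂
  rcases hlam M₁ hm₁ M₂ hm₂ with h | h | h
  · exact Finset.disjoint_iff_inter_eq_empty.mpr h
  · exact absurd (HasSubset.Subset.ssubset_of_ne h hne) (hmax₁ M₂ hm₂)
  · exact absurd (HasSubset.Subset.ssubset_of_ne h hne.symm) (hmax₂ M₁ hm₁)

lemma laminar_big_bound (G : Finset (Finset V))
    (hodd : ∀ A ∈ G, Odd A.card) (hbig : ∀ A ∈ G, 3 ≤ A.card)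
    (hlam : ∀ A ∈ G, ∀ B ∈ G, A ∩ B = ∅ ∨ A ⊆ B ∨ B ⊆ A) :
    2 * G.card + (maxSets G).card ≤ ∑ M ∈ maxSets G, M.card := by
  induction G using Finset.strongInduction with
  | _ G ih =>
  rcases G.eq_empty_or_nonempty with rfl | ⟨A₀, hA₀⟩
  · simp [maxSets]
  have hMxne : (maxSets G).Nonempty := by
    obtain ⟨M, hM, _⟩ := exists_maximal_superset G hA₀
    exact ⟨M, hM⟩
  set G' := G \ maxSets G with hG'
  have hG'ss : G' ⊂ G := Finset.sdiff_ssubset (maxSets_subset G) hMxne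
  have hG'sub : G' ⊆ G := hG'ss.subset
  have IH : 2 * G'.card + (maxSets G').card ≤ ∑ M ∈ maxSets G', M.card :=
    ih G' hG'ss (fun A hA => hodd A (hG'sub hA)) (fun A hA => hbig A (hG'sub hA))
      (fun A hA B hB => hlam A (hG'sub hA) B (hG'sub hB))
  -- the assignment of each maximal set of G' to a maximal set of G containing it
  have hφex : ∀ N ∈ maxSets G', ∃ M ∈ maxSets G, N ⊆ M := by
    intro N hN
    exact exists_maximal_superset G (hG'sub (maxSets_subset G' hN))
  set φ : Finset V → Finset V := fun N =>
    if h : N ∈ maxSets G' then (hφex N h).choose else ∅ with hφ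
  have hφmem : ∀ N ∈ maxSets G', φ N ∈ maxSets G := by
    intro N hN; rw [hφ]; simp only [dif_pos hN]; exact (hφex N hN).choose_spec.1
  have hφsub : ∀ N ∈ maxSets G', N ⊆ φ N := by
    intro N hN; rw [hφ]; simp only [dif_pos hN]; exact (hφex N hN).choose_spec.2
  -- per-M inequality
  have key : ∀ M ∈ maxSets G,
      3 + ∑ N ∈ (maxSets G').filter (fun N => φ N = M), N.card ≤
        M.card + ((maxSets G').filter (fun N => φ N = M)).card := by
    intro M hM
    set fib := (maxSets G').filter (fun N => φ N = M) with hfib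
    have hfibsubM : ∀ N ∈ fib, N ⊂ M := by
      intro N hN
      obtain ⟨hN', hNM⟩ := Finset.mem_filter.mp hN
      have hsub : N ⊆ M := hNM ▸ hφsub N hN'
      refine hsub.ssubset_of_ne ?_
      intro h
      have : N ∈ G' := maxSets_subset G' hN'
      rw [hG', Finset.mem_sdiff] at this
      exact this.2 (h ▸ hM)
    have hfibG : ∀ N ∈ fib, N ∈ G := fun N hN =>
      hG'sub (maxSets_subset G' ((Finset.mem_filter.mp hN).1))
    have hdisj : ∀ N₁ ∈ fib, ∀ N₂ ∈ fib, N₁ ≠ N₂ → Disjoint N₁ N₂ := by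
      intro N₁ h₁ N₂ h₂ hne
      exact maxSets_disjoint G'
        (fun A hA B hB => hlam A (hG'sub hA) B (hG'sub hB))
        (Finset.mem_filter.mp h₁).1 (Finset.mem_filter.mp h₂).1 hne
    have hsumle : ∑ N ∈ fib, N.card ≤ M.card := by
      rw [← Finset.card_biUnion hdisj]
      apply Finset.card_le_card
      intro x hx
      obtain ⟨N, hN, hxN⟩ := Finset.mem_biUnion.mp hx
      exact (hfibsubM N hN).subset hxN
    have hMG : M ∈ G := maxSets_subset G hM
    have hM3 : 3 ≤ M.card := hbig M hMG
    obtain ⟨kM, hkM⟩ := hodd M hMG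
    rcases Nat.lt_or_ge fib.card 3 with hj | hj
    · interval_cases hjc : fib.card
      · rw [Finset.card_eq_zero.mp hjc]; simp; omega
      · obtain ⟨N, hNeq⟩ := Finset.card_eq_one.mp hjc
        have hNfib : N ∈ fib := hNeq ▸ Finset.mem_singleton_self N
        obtain ⟨kN, hkN⟩ := hodd N (hfibG N hNfib)
        have : N.card < M.card := Finset.card_lt_card (hfibsubM N hNfib)
        rw [hNeq, Finset.sum_singleton]
        omega
      · obtain ⟨a, b, hab, hNeq⟩ := Finset.card_eq_two.mp hjc
        have ha : a ∈ fib := hNeq ▸ by simp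
        have hb : b ∈ fib := hNeq ▸ by simp
        obtain ⟨ka, hka⟩ := hodd a (hfibG a ha)
        obtain ⟨kb, hkb⟩ := hodd b (hfibG b hb)
        have hs : ∑ N ∈ fib, N.card = a.card + b.card := by
          rw [hNeq, Finset.sum_pair hab]
        omega
    · omega
  -- sum the per-M inequality
  have hmaps : ∀ N ∈ maxSets G', φ N ∈ maxSets G := hφmem
  have hsum1 : ∑ M ∈ maxSets G, ∑ N ∈ (maxSets G').filter (fun N => φ N = M), N.card
      = ∑ N ∈ maxSets G', N.card := Finset.sum_fiberwise_of_maps_to hmaps _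
  have hsum2 : ∑ M ∈ maxSets G, ((maxSets G').filter (fun N => φ N = M)).card
      = (maxSets G').card := by
    have := Finset.sum_fiberwise_of_maps_to hmaps (fun _ => (1 : ℕ))
    simpa using this
  have hsummed : 3 * (maxSets G).card + ∑ N ∈ maxSets G', N.card ≤
      (∑ M ∈ maxSets G, M.card) + (maxSets G').card := by
    calc 3 * (maxSets G).card + ∑ N ∈ maxSets G', N.card
        = ∑ M ∈ maxSets G, (3 + ∑ N ∈ (maxSets G').filter (fun N => φ N = M), N.card) := by
          rw [Finset.sum_add_distrib, hsum1]; simp [mul_comm]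
      _ ≤ ∑ M ∈ maxSets G, (M.card + ((maxSets G').filter (fun N => φ N = M)).card) :=
          Finset.sum_le_sum key
      _ = (∑ M ∈ maxSets G, M.card) + (maxSets G').card := by
          rw [Finset.sum_add_distrib, hsum2]
  have hcardsplit : G.card = (maxSets G).card + G'.card := by
    rw [hG']
    exact (Finset.card_sdiff_add_card_eq_card (maxSets_subset G)).symm ▸ by
      omega
  omega

lemma laminar_card_bound_s15 (G : Finset (Finset V))
    (hodd : ∀ A ∈ G, Odd A.card)
    (hlam : ∀ A ∈ G, ∀ B ∈ G, A ∩ B = ∅ ∨ A ⊆ B ∨ B ⊆ A) :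
    G.card ≤ Fintype.card V + Fintype.card V / 2 := by
  classical
  set n := Fintype.card V
  set G₁ := G.filter (fun A => A.card = 1) with hG₁
  set G₃ := G.filter (fun A => 3 ≤ A.card) with hG₃
  have hsplit : G = G₁ ∪ G₃ := by
    ext A
    simp only [hG₁, hG₃, Finset.mem_union, Finset.mem_filter]
    constructor
    · intro hA
      obtain ⟨k, hk⟩ := hodd A hA
      rcases Nat.eq_or_lt_of_le (Nat.zero_le k) with h | h
      · exact Or.inl ⟨hA, by omega⟩
      · exact Or.inr ⟨hA, by omega⟩
    · rintro (⟨h, _⟩ | ⟨h, _⟩) <;> exact h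
  have h1 : G₁.card ≤ n := by
    have hsub : G₁ ⊆ Finset.univ.image (fun v : V => ({v} : Finset V)) := by
      intro A hA
      obtain ⟨a, ha⟩ := Finset.card_eq_one.mp (Finset.mem_filter.mp hA).2
      exact Finset.mem_image.mpr ⟨a, Finset.mem_univ a, ha.symm⟩
    calc G₁.card ≤ _ := Finset.card_le_card hsub
      _ ≤ Finset.univ.card := Finset.card_image_le
      _ = n := rfl
  have h3 : 2 * G₃.card ≤ n := by
    have hodd₃ : ∀ A ∈ G₃, Odd A.card := fun A hA => hodd A (Finset.mem_filter.mp hA).1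
    have hbig₃ : ∀ A ∈ G₃, 3 ≤ A.card := fun A hA => (Finset.mem_filter.mp hA).2
    have hlam₃ : ∀ A ∈ G₃, ∀ B ∈ G₃, A ∩ B = ∅ ∨ A ⊆ B ∨ B ⊆ A := fun A hA B hB =>
      hlam A (Finset.mem_filter.mp hA).1 B (Finset.mem_filter.mp hB).1
    have hb := laminar_big_bound G₃ hodd₃ hbig₃ hlam₃
    have hsumn : ∑ M ∈ maxSets G₃, M.card ≤ n := by
      rw [← Finset.card_biUnion (fun M₁ h₁ M₂ h₂ hne => maxSets_disjoint G₃ hlam₃ h₁ h₂ hne)]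
      calc _ ≤ Finset.univ.card := Finset.card_le_card (Finset.subset_univ _)
        _ = n := rfl
    omega
  calc G.card ≤ G₁.card + G₃.card := hsplit ▸ Finset.card_union_le _ _
    _ ≤ n + n / 2 := by omega

end Laminar

section Encode
variable {V : Type*} [Fintype V] [DecidableEq V] {W : ℕ}

def suppF (z : Finset V → Fin (W+1)) : Finset (Finset V) :=
  Finset.univ.filter (fun T => z T ≠ 0)

lemma mem_suppF {z : Finset V → Fin (W+1)} {T} : T ∈ suppF z ↔ z T ≠ 0 := by
  simp [suppF]

noncomputable def aSet (z : Finset V → Fin (W+1)) (i : Fin (suppF z).card) : Finset V :=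
  ((suppF z).equivFin.symm i : Finset V)

lemma aSet_mem (z : Finset V → Fin (W+1)) (i) : aSet z i ∈ suppF z :=
  ((suppF z).equivFin.symm i).2

lemma aSet_nz (z : Finset V → Fin (W+1)) (i) : z (aSet z i) ≠ 0 :=
  mem_suppF.mp (aSet_mem z i)

lemma aSet_inj (z : Finset V → Fin (W+1)) : Function.Injective (aSet z) :=
  fun _ _ h => (suppF z).equivFin.symm.injective (Subtype.coe_injective h)

lemma aSet_eqv (z : Finset V → Fin (W+1)) (T) (h : T ∈ suppF z) :
    aSet z ((suppF z).equivFin ⟨T, h⟩) = T := by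
  simp [aSet]

noncomputable def attachIdx (z : Finset V → Fin (W+1)) (v : V) :
    Option (Fin (suppF z).card) :=
  if h : ((suppF z).filter (fun T => v ∈ T)).Nonempty then
    some ((suppF z).equivFin ⟨(Finset.exists_min_image _ Finset.card h).choose,
      Finset.mem_of_mem_filter _ (Finset.exists_min_image _ Finset.card h).choose_spec.1⟩)
  else none

noncomputable def parentIdx (z : Finset V → Fin (W+1)) (i : Fin (suppF z).card) :
    Option (Fin (suppF z).card) :=
  if h : ((suppF z).filter (fun T => aSet z i ⊂ T)).Nonempty then
    some ((suppF z).equivFin ⟨(Finset.exists_min_image _ Finset.card h).choose,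
      Finset.mem_of_mem_filter _ (Finset.exists_min_image _ Finset.card h).choose_spec.1⟩)
  else none

lemma attachIdx_mem {z : Finset V → Fin (W+1)} {v : V} {j}
    (h : attachIdx z v = some j) : v ∈ aSet z j := by
  rw [attachIdx] at h
  split at h
  · rename_i hne
    obtain rfl := Option.some_inj.mp h
    rw [aSet_eqv]
    exact (Finset.mem_filter.mp
      (Finset.exists_min_image _ Finset.card hne).choose_spec.1).2
  · exact absurd h (by simp)

lemma attachIdx_spec {z : Finset V → Fin (W+1)}
    (hlam : ∀ T₁ T₂, z T₁ ≠ 0 → z T₂ ≠ 0 → T₁ ∩ T₂ = ∅ ∨ T₁ ⊆ T₂ ∨ T₂ ⊆ T₁)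
    {v : V} {i} (hv : v ∈ aSet z i) :
    ∃ j, attachIdx z v = some j ∧ v ∈ aSet z j ∧ aSet z j ⊆ aSet z i := by
  have hne : ((suppF z).filter (fun T => v ∈ T)).Nonempty :=
    ⟨aSet z i, Finset.mem_filter.mpr ⟨aSet_mem z i, hv⟩⟩
  set c := (Finset.exists_min_image ((suppF z).filter (fun T => v ∈ T)) Finset.card hne).choose
    with hc
  have hspec := (Finset.exists_min_image ((suppF z).filter (fun T => v ∈ T))
    Finset.card hne).choose_spec
  have hcmem : c ∈ suppF z := Finset.mem_of_mem_filter _ hspec.1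
  have hvc : v ∈ c := (Finset.mem_filter.mp hspec.1).2
  refine ⟨(suppF z).equivFin ⟨c, hcmem⟩, ?_, ?_, ?_⟩
  · rw [attachIdx, dif_pos hne]
  · rw [aSet_eqv]; exact hvc
  · rw [aSet_eqv]
    have hcard : c.card ≤ (aSet z i).card :=
      hspec.2 _ (Finset.mem_filter.mpr ⟨aSet_mem z i, hv⟩)
    rcases hlam c (aSet z i) (mem_suppF.mp hcmem) (aSet_nz z i) with h | h | h
    · exfalso
      have : v ∈ c ∩ aSet z i := Finset.mem_inter.mpr ⟨hvc, hv⟩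
      rw [h] at this; exact absurd this (Finset.notMem_empty v)
    · exact h
    · exact le_of_eq (Finset.eq_of_subset_of_card_le h hcard).symm

lemma parentIdx_some_ssub {z : Finset V → Fin (W+1)} {i k}
    (h : parentIdx z i = some k) : aSet z i ⊂ aSet z k := by
  rw [parentIdx] at h
  split at h
  · rename_i hne
    obtain rfl := Option.some_inj.mp h
    rw [aSet_eqv]
    exact (Finset.mem_filter.mp
      (Finset.exists_min_image _ Finset.card hne).choose_spec.1).2
  · exact absurd h (by simp)

lemma parentIdx_spec {z : Finset V → Fin (W+1)}
    (hodd : ∀ T, z T ≠ 0 → Odd T.card)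
    (hlam : ∀ T₁ T₂, z T₁ ≠ 0 → z T₂ ≠ 0 → T₁ ∩ T₂ = ∅ ∨ T₁ ⊆ T₂ ∨ T₂ ⊆ T₁)
    {i} {T} (hT : T ∈ suppF z) (hsub : aSet z i ⊂ T) :
    ∃ k, parentIdx z i = some k ∧ aSet z k ⊆ T := by
  have hne : ((suppF z).filter (fun S => aSet z i ⊂ S)).Nonempty :=
    ⟨T, Finset.mem_filter.mpr ⟨hT, hsub⟩⟩
  set c := (Finset.exists_min_image ((suppF z).filter (fun S => aSet z i ⊂ S))
    Finset.card hne).choose with hc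
  have hspec := (Finset.exists_min_image ((suppF z).filter (fun S => aSet z i ⊂ S))
    Finset.card hne).choose_spec
  have hcmem : c ∈ suppF z := Finset.mem_of_mem_filter _ hspec.1
  have hic : aSet z i ⊂ c := (Finset.mem_filter.mp hspec.1).2
  refine ⟨(suppF z).equivFin ⟨c, hcmem⟩, ?_, ?_⟩
  · rw [parentIdx, dif_pos hne]
  · rw [aSet_eqv]
    have hcard : c.card ≤ T.card := hspec.2 _ (Finset.mem_filter.mpr ⟨hT, hsub⟩)
    have hione : (aSet z i).Nonempty := by
      obtain ⟨k, hk⟩ := hodd _ (aSet_nz z i)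
      rw [← Finset.card_pos]; omega
    obtain ⟨x, hx⟩ := hione
    rcases hlam c T (mem_suppF.mp hcmem) (mem_suppF.mp hT) with h | h | h
    · exfalso
      have hx2 : x ∈ c ∩ T := Finset.mem_inter.mpr ⟨hic.subset hx, hsub.subset hx⟩
      rw [h] at hx2; exact absurd hx2 (Finset.notMem_empty x)
    · exact h
    · exact le_of_eq (Finset.eq_of_subset_of_card_le h hcard).symm

def reachRel {B : ℕ} (par : Fin B → Option (Fin B)) : Fin B → Fin B → Prop :=
  Relation.ReflTransGen (fun a b => par a = some b)

lemma reach_mono {z : Finset V → Fin (W+1)} {j i : Fin (suppF z).card}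
    (h : reachRel (parentIdx z) j i) : aSet z j ⊆ aSet z i := by
  induction h with
  | refl => exact subset_rfl
  | tail _ hstep ih => exact ih.trans (parentIdx_some_ssub hstep).subset

lemma reach_of_subset {z : Finset V → Fin (W+1)}
    (hodd : ∀ T, z T ≠ 0 → Odd T.card)
    (hlam : ∀ T₁ T₂, z T₁ ≠ 0 → z T₂ ≠ 0 → T₁ ∩ T₂ = ∅ ∨ T₁ ⊆ T₂ ∨ T₂ ⊆ T₁) :
    ∀ (d : ℕ) (j i : Fin (suppF z).card), (aSet z i).card - (aSet z j).card ≤ d →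
      aSet z j ⊆ aSet z i → reachRel (parentIdx z) j i := by
  intro d
  induction d with
  | zero =>
    intro j i hc hsub
    have hcard : (aSet z i).card ≤ (aSet z j).card := by omega
    have : aSet z j = aSet z i := Finset.eq_of_subset_of_card_le hsub hcard
    obtain rfl := aSet_inj z this
    exact Relation.ReflTransGen.refl
  | succ d ihd =>
    intro j i hc hsub
    by_cases he : aSet z j = aSet z i
    · obtain rfl := aSet_inj z he
      exact Relation.ReflTransGen.refl
    · have hss : aSet z j ⊂ aSet z i := hsub.ssubset_of_ne he
      obtain ⟨k, hpk, hki⟩ := parentIdx_spec hodd hlam (aSet_mem z i) hss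
      have hjk := parentIdx_some_ssub hpk
      have hd : (aSet z i).card - (aSet z k).card ≤ d := by
        have h1 := Finset.card_lt_card hjk
        have h2 := Finset.card_le_card hki
        omega
      exact Relation.ReflTransGen.head hpk (ihd k i hd hki)

noncomputable def parentB (B : ℕ) (z : Finset V → Fin (W+1)) : Fin B → Option (Fin B) :=
  fun i => if h : ((i : ℕ) < (suppF z).card ∧ (suppF z).card ≤ B) then
    (parentIdx z ⟨(i : ℕ), h.1⟩).map (Fin.castLE h.2) else none

noncomputable def attachB (B : ℕ) (z : Finset V → Fin (W+1)) : V → Option (Fin B) :=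
  fun v => if h : (suppF z).card ≤ B then (attachIdx z v).map (Fin.castLE h) else none

noncomputable def valsB (B : ℕ) (z : Finset V → Fin (W+1)) : Fin B → Fin (W+1) :=
  fun i => if h : (i : ℕ) < (suppF z).card then z (aSet z ⟨(i : ℕ), h⟩) else 0

noncomputable def dSet {B : ℕ} (par : Fin B → Option (Fin B)) (att : V → Option (Fin B))
    (i : Fin B) : Finset V :=
  Finset.univ.filter (fun v => ∃ j, att v = some j ∧ reachRel par j i)

lemma parentB_castLE {z : Finset V → Fin (W+1)} {B : ℕ} (hm : (suppF z).card ≤ B)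
    {a b : Fin (suppF z).card} (h : parentIdx z a = some b) :
    parentB B z (Fin.castLE hm a) = some (Fin.castLE hm b) := by
  have hlt : ((Fin.castLE hm a : Fin B) : ℕ) < (suppF z).card := a.isLt
  rw [parentB, dif_pos ⟨hlt, hm⟩]
  have ha : (⟨((Fin.castLE hm a : Fin B) : ℕ), hlt⟩ : Fin (suppF z).card) = a := rfl
  rw [ha, h, Option.map_some]

lemma reachB_of_reach {z : Finset V → Fin (W+1)} {B : ℕ} (hm : (suppF z).card ≤ B)
    {j i : Fin (suppF z).card} (h : reachRel (parentIdx z) j i) :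
    reachRel (parentB B z) (Fin.castLE hm j) (Fin.castLE hm i) := by
  induction h with
  | refl => exact Relation.ReflTransGen.refl
  | tail _ hstep ih => exact ih.tail (parentB_castLE hm hstep)

lemma parentB_inv {z : Finset V → Fin (W+1)} {B : ℕ} (hm : (suppF z).card ≤ B)
    {b k : Fin B} (h : parentB B z b = some k) :
    ∃ (hb : (b : ℕ) < (suppF z).card) (k' : Fin (suppF z).card),
      parentIdx z ⟨(b : ℕ), hb⟩ = some k' ∧ k = Fin.castLE hm k' := by
  by_cases hcond : ((b : ℕ) < (suppF z).card ∧ (suppF z).card ≤ B)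
  · rw [parentB, dif_pos hcond] at h
    obtain ⟨k', hk', hmap⟩ := Option.map_eq_some_iff.mp h
    exact ⟨hcond.1, k', hk', hmap.symm⟩
  · rw [parentB, dif_neg hcond] at h
    exact absurd h (by simp)

lemma reach_of_reachB {z : Finset V → Fin (W+1)} {B : ℕ} (hm : (suppF z).card ≤ B)
    {j : Fin (suppF z).card} {iB : Fin B}
    (h : reachRel (parentB B z) (Fin.castLE hm j) iB) :
    ∀ i, iB = Fin.castLE hm i → reachRel (parentIdx z) j i := by
  induction h with
  | refl =>
    intro i hi
    have : j = i := Fin.castLE_injective hm hi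
    exact this ▸ Relation.ReflTransGen.refl
  | @tail b c hrest hstep ih =>
    intro i hi
    obtain ⟨hb, k', hpk, hkeq⟩ := parentB_inv hm hstep
    have hbeq : b = Fin.castLE hm ⟨(b : ℕ), hb⟩ := Fin.ext rfl
    have hr := ih _ hbeq
    have hki : k' = i := by
      apply Fin.ext
      have : (c : ℕ) = (k' : ℕ) := congrArg Fin.val hkeq
      have h2 : (c : ℕ) = (i : ℕ) := congrArg Fin.val hi
      omega
    exact hr.tail (hki ▸ hpk)

lemma dSet_eq {z : Finset V → Fin (W+1)}
    (hodd : ∀ T, z T ≠ 0 → Odd T.card)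
    (hlam : ∀ T₁ T₂, z T₁ ≠ 0 → z T₂ ≠ 0 → T₁ ∩ T₂ = ∅ ∨ T₁ ⊆ T₂ ∨ T₂ ⊆ T₁)
    {B : ℕ} (hm : (suppF z).card ≤ B) (i : Fin (suppF z).card) :
    dSet (parentB B z) (attachB B z) (Fin.castLE hm i) = aSet z i := by
  ext v
  simp only [dSet, Finset.mem_filter, Finset.mem_univ, true_and]
  constructor
  · rintro ⟨jB, hatt, hreach⟩
    rw [attachB, dif_pos hm] at hatt
    obtain ⟨j, hj, rfl⟩ := Option.map_eq_some_iff.mp hatt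
    have hr : reachRel (parentIdx z) j i := reach_of_reachB hm hreach i rfl
    exact (reach_mono hr) (attachIdx_mem hj)
  · intro hv
    obtain ⟨j, hj, hvj, hsub⟩ := attachIdx_spec hlam hv
    have hr : reachRel (parentIdx z) j i := reach_of_subset hodd hlam _ j i le_rfl hsub
    refine ⟨Fin.castLE hm j, ?_, reachB_of_reach hm hr⟩
    rw [attachB, dif_pos hm, hj, Option.map_some]

lemma valsB_ne_zero_iff {z : Finset V → Fin (W+1)} {B : ℕ} {i : Fin B} :
    valsB B z i ≠ 0 ↔ (i : ℕ) < (suppF z).card := by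
  constructor
  · intro h
    by_contra hlt
    rw [valsB, dif_neg hlt] at h
    exact h rfl
  · intro h
    rw [valsB, dif_pos h]
    exact aSet_nz z _

lemma z_recover {z : Finset V → Fin (W+1)}
    (hodd : ∀ T, z T ≠ 0 → Odd T.card)
    (hlam : ∀ T₁ T₂, z T₁ ≠ 0 → z T₂ ≠ 0 → T₁ ∩ T₂ = ∅ ∨ T₁ ⊆ T₂ ∨ T₂ ⊆ T₁)
    {B : ℕ} (hm : (suppF z).card ≤ B) (T : Finset V) :
    ((z T : ℕ)) = ∑ i ∈ Finset.univ.filter (fun i : Fin B =>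
        valsB B z i ≠ 0 ∧ dSet (parentB B z) (attachB B z) i = T), ((valsB B z i : ℕ)) := by
  by_cases hT : z T = 0
  · have hempty : Finset.univ.filter (fun i : Fin B =>
        valsB B z i ≠ 0 ∧ dSet (parentB B z) (attachB B z) i = T) = ∅ := by
      rw [Finset.filter_eq_empty_iff]
      rintro i - ⟨hnz, hdec⟩
      have hlt := valsB_ne_zero_iff.mp hnz
      have hi : i = Fin.castLE hm ⟨(i : ℕ), hlt⟩ := Fin.ext rfl
      rw [hi, dSet_eq hodd hlam hm] at hdec
      exact (hdec ▸ aSet_nz z ⟨(i : ℕ), hlt⟩) hT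
    rw [hempty, Finset.sum_empty, hT]
    rfl
  · have hTs : T ∈ suppF z := mem_suppF.mpr hT
    set i₀' := (suppF z).equivFin ⟨T, hTs⟩ with hi₀'
    have hset : Finset.univ.filter (fun i : Fin B =>
        valsB B z i ≠ 0 ∧ dSet (parentB B z) (attachB B z) i = T) = {Fin.castLE hm i₀'} := by
      ext i
      simp only [Finset.mem_filter, Finset.mem_univ, true_and, Finset.mem_singleton]
      constructor
      · rintro ⟨hnz, hdec⟩
        have hlt := valsB_ne_zero_iff.mp hnz
        have hi : i = Fin.castLE hm ⟨(i : ℕ), hlt⟩ := Fin.ext rfl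
        rw [hi, dSet_eq hodd hlam hm] at hdec
        have heq : (⟨(i : ℕ), hlt⟩ : Fin (suppF z).card) = i₀' := by
          apply aSet_inj z
          rw [hdec, hi₀', aSet_eqv]
        rw [hi, heq]
      · rintro rfl
        refine ⟨valsB_ne_zero_iff.mpr i₀'.isLt, ?_⟩
        rw [dSet_eq hodd hlam hm, hi₀', aSet_eqv]
    rw [hset, Finset.sum_singleton]
    have hv : valsB B z (Fin.castLE hm i₀') = z T := by
      rw [valsB, dif_pos (show ((Fin.castLE hm i₀' : Fin B) : ℕ) < (suppF z).card from i₀'.isLt)]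
      have heq2 : (⟨((Fin.castLE hm i₀' : Fin B) : ℕ), i₀'.isLt⟩ : Fin (suppF z).card) = i₀' :=
        Fin.ext rfl
      rw [heq2, hi₀', aSet_eqv]
    rw [hv]

lemma z_encoding_inj {z₁ z₂ : Finset V → Fin (W+1)}
    (hodd₁ : ∀ T, z₁ T ≠ 0 → Odd T.card)
    (hlam₁ : ∀ T₁ T₂, z₁ T₁ ≠ 0 → z₁ T₂ ≠ 0 → T₁ ∩ T₂ = ∅ ∨ T₁ ⊆ T₂ ∨ T₂ ⊆ T₁)
    (hodd₂ : ∀ T, z₂ T ≠ 0 → Odd T.card)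
    (hlam₂ : ∀ T₁ T₂, z₂ T₁ ≠ 0 → z₂ T₂ ≠ 0 → T₁ ∩ T₂ = ∅ ∨ T₁ ⊆ T₂ ∨ T₂ ⊆ T₁)
    {B : ℕ} (hm₁ : (suppF z₁).card ≤ B) (hm₂ : (suppF z₂).card ≤ B)
    (hpar : parentB B z₁ = parentB B z₂) (hatt : attachB B z₁ = attachB B z₂)
    (hvals : valsB B z₁ = valsB B z₂) : z₁ = z₂ := by
  funext T
  have h₁ := z_recover hodd₁ hlam₁ hm₁ T
  have h₂ := z_recover hodd₂ hlam₂ hm₂ T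
  rw [hpar, hatt, hvals] at h₁
  exact Fin.ext (h₁.trans h₂.symm)

end Encode

section Prob
variable {V : Type*} [Fintype V] [DecidableEq V]

lemma sum_avoid_eq {E F : Finset (Sym2 V)} (hF : F ⊆ E) (p : Sym2 V → ℝ) :
    ∑ S ∈ E.powerset.filter (fun S => Disjoint S F),
      ((∏ e ∈ S, p e) * ∏ e ∈ E \ S, (1 - p e)) = ∏ e ∈ F, (1 - p e) := by
  have hpow : E.powerset.filter (fun S => Disjoint S F) = (E \ F).powerset := by
    ext S
    simp only [Finset.mem_filter, Finset.mem_powerset, Finset.subset_sdiff]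
  rw [hpow]
  have hsplit : ∀ S ∈ (E \ F).powerset,
      (∏ e ∈ S, p e) * ∏ e ∈ E \ S, (1 - p e)
      = (∏ e ∈ F, (1 - p e)) * ((∏ e ∈ S, p e) * ∏ e ∈ (E \ F) \ S, (1 - p e)) := by
    intro S hS
    rw [Finset.mem_powerset] at hS
    have hd : Disjoint F ((E \ F) \ S) := by
      refine Finset.disjoint_left.mpr (fun e he hc => ?_)
      have := (Finset.mem_sdiff.mp (Finset.mem_sdiff.mp hc).1).2
      exact this he
    have hset : E \ S = F ∪ ((E \ F) \ S) := by
      ext e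
      simp only [Finset.mem_sdiff, Finset.mem_union]
      constructor
      · rintro ⟨heE, heS⟩
        by_cases heF : e ∈ F
        · exact Or.inl heF
        · exact Or.inr ⟨⟨heE, heF⟩, heS⟩
      · rintro (heF | ⟨⟨heE, _⟩, heS⟩)
        · refine ⟨hF heF, fun hc => ?_⟩
          exact (Finset.mem_sdiff.mp (hS hc)).2 heF
        · exact ⟨heE, heS⟩
    rw [hset, Finset.prod_union hd]
    ring
  rw [Finset.sum_congr rfl hsplit, ← Finset.mul_sum, ← Finset.prod_add]
  simp

lemma perF_bound
    (E : Finset (Sym2 V)) (w : Sym2 V → ℤ) (hw : ∀ e ∈ E, 1 ≤ w e)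
    (W : ℕ) (hW2 : 2 ≤ W) (hn : 4 < Fintype.card V)
    (q : Sym2 V → ℝ) (hq : ∀ e ∈ E, 0 < q e)
    (Q : ℝ) (hQpos : 0 < Q)
    (ε : ℝ) (hε0 : 0 < ε)
    (p : Sym2 V → ℝ)
    (hp : ∀ e ∈ E, p e = min 1
      ((8 * Fintype.card V * Real.log (Fintype.card V * W) / ε) *
        (q e * (w e : ℝ) / Q)))
    {F : Finset (Sym2 V)} (hFE : F ⊆ E)
    (hFw : (ε / 2) * Q < ∑ e ∈ F, q e * (w e : ℝ)) :
    ∏ e ∈ F, (1 - p e) ≤ (((Fintype.card V : ℝ) * W) ^ (4 * Fintype.card V))⁻¹ := by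
  set n := Fintype.card V with hn'
  set x : ℝ := (n : ℝ) * W with hx
  have hx1 : (1 : ℝ) < x := by
    rw [hx]
    have h5 : (5 : ℝ) ≤ (n : ℝ) := by exact_mod_cast (by omega : 5 ≤ n)
    have h2 : (2 : ℝ) ≤ (W : ℝ) := by exact_mod_cast hW2
    nlinarith
  have hx0 : (0 : ℝ) < x := lt_trans one_pos hx1
  set L : ℝ := Real.log x with hL
  have hL0 : 0 < L := Real.log_pos hx1
  set c : ℝ := 8 * n * L / ε with hc
  have hc0 : 0 < c := by
    apply div_pos _ hε0
    have : (0:ℝ) < (n:ℝ) := by exact_mod_cast (by omega : 0 < n)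
    positivity
  have hw1 : ∀ e ∈ F, (1 : ℝ) ≤ (w e : ℝ) := fun e he => by exact_mod_cast hw e (hFE he)
  have hqw : ∀ e ∈ F, 0 < q e * (w e : ℝ) := fun e he =>
    mul_pos (hq e (hFE he)) (lt_of_lt_of_le one_pos (hw1 e he))
  by_cases hbig : ∃ e ∈ F, 1 ≤ c * (q e * (w e : ℝ) / Q)
  · obtain ⟨e₀, he₀, hbe₀⟩ := hbig
    have hpe₀ : p e₀ = 1 := by
      rw [hp e₀ (hFE he₀)]
      exact min_eq_left hbe₀
    have hzero : ∏ e ∈ F, (1 - p e) = 0 :=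
      Finset.prod_eq_zero he₀ (by rw [hpe₀]; ring)
    rw [hzero]
    positivity
  · push_neg at hbig
    have hpe : ∀ e ∈ F, p e = c * (q e * (w e : ℝ) / Q) := by
      intro e he
      rw [hp e (hFE he)]
      exact min_eq_right (le_of_lt (hbig e he))
    have hp0 : ∀ e ∈ F, 0 ≤ p e := by
      intro e he
      rw [hpe e he]
      have := hqw e he
      positivity
    have hp1 : ∀ e ∈ F, p e ≤ 1 := fun e he => le_of_lt ((hpe e he) ▸ hbig e he)
    have hstep : ∏ e ∈ F, (1 - p e) ≤ Real.exp (-∑ e ∈ F, p e) := by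
      have h1 : ∏ e ∈ F, (1 - p e) ≤ ∏ e ∈ F, Real.exp (-(p e)) := by
        apply Finset.prod_le_prod
        · intro e he; linarith [hp1 e he]
        · intro e he
          have := Real.add_one_le_exp (-(p e))
          linarith
      calc ∏ e ∈ F, (1 - p e) ≤ ∏ e ∈ F, Real.exp (-(p e)) := h1
        _ = Real.exp (∑ e ∈ F, -(p e)) := (Real.exp_sum F _).symm
        _ = Real.exp (-∑ e ∈ F, p e) := by rw [Finset.sum_neg_distrib]
    have hsum : 4 * (n:ℝ) * L < ∑ e ∈ F, p e := by
      have h1 : ∑ e ∈ F, p e = c / Q * ∑ e ∈ F, q e * (w e : ℝ) := by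
        rw [Finset.mul_sum]
        apply Finset.sum_congr rfl
        intro e he
        rw [hpe e he]
        field_simp
      rw [h1]
      have h2 : c / Q * ((ε/2)*Q) < c / Q * ∑ e ∈ F, q e * (w e : ℝ) :=
        mul_lt_mul_of_pos_left hFw (div_pos hc0 hQpos)
      have h3 : c / Q * ((ε/2)*Q) = 4 * (n:ℝ) * L := by
        rw [hc]
        field_simp
        ring
      linarith
    have hfin : Real.exp (-∑ e ∈ F, p e) ≤ (x ^ (4*n))⁻¹ := by
      have h4 : Real.exp (-(4 * (n:ℝ) * L)) = (x ^ (4*n))⁻¹ := by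
        rw [Real.exp_neg]
        congr 1
        have h5 : (4 : ℝ) * (n:ℝ) * L = ((4*n : ℕ) : ℝ) * L := by push_cast; ring
        rw [h5, Real.exp_nat_mul, Real.exp_log hx0]
      rw [← h4]
      apply Real.exp_le_exp.mpr
      linarith
    exact le_trans hstep hfin

lemma aux_main
    (hn : 4 < Fintype.card V)
    (E : Finset (Sym2 V)) (w : Sym2 V → ℤ) (hw : ∀ e ∈ E, 1 ≤ w e)
    (W : ℕ) (hW2 : 2 ≤ W)
    (q : Sym2 V → ℝ) (hq : ∀ e ∈ E, 0 < q e)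
    (Q : ℝ) (hQpos : 0 < Q)
    (ε : ℝ) (hε0 : 0 < ε)
    (p : Sym2 V → ℝ)
    (hp : ∀ e ∈ E, p e = min 1
      ((8 * Fintype.card V * Real.log (Fintype.card V * W) / ε) *
        (q e * (w e : ℝ) / Q)))
    (𝓕 : Finset (Finset (Sym2 V)))
    (h𝓕sub : ∀ F ∈ 𝓕, F ⊆ E)
    (h𝓕w : ∀ F ∈ 𝓕, (ε/2) * Q < ∑ e ∈ F, q e * (w e : ℝ))
    (hcard : 𝓕.card ≤ (Fintype.card V * W) ^ (3 * Fintype.card V))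
    (Bad : Finset (Finset (Sym2 V))) (hBadsub : Bad ⊆ E.powerset)
    (hwit : ∀ S ∈ Bad, ∃ F ∈ 𝓕, Disjoint S F) :
    ∑ S ∈ Bad, ((∏ e ∈ S, p e) * ∏ e ∈ E \ S, (1 - p e))
      ≤ 1 / ((Fintype.card V : ℝ) * W) ^ Fintype.card V := by
  set n := Fintype.card V with hn'
  set x : ℝ := (n : ℝ) * W with hx
  have hx1 : (1:ℝ) < x := by
    rw [hx]
    have h5 : (5 : ℝ) ≤ (n : ℝ) := by exact_mod_cast (by omega : 5 ≤ n)
    have h2 : (2 : ℝ) ≤ (W : ℝ) := by exact_mod_cast hW2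
    nlinarith
  have hx0 : (0:ℝ) < x := lt_trans one_pos hx1
  have hL0 : 0 ≤ Real.log x := Real.log_nonneg (le_of_lt hx1)
  have hp0 : ∀ e ∈ E, 0 ≤ p e := by
    intro e he
    rw [hp e he]
    apply le_min zero_le_one
    have hq' := le_of_lt (hq e he)
    have hw' : (0:ℝ) ≤ (w e : ℝ) := by exact_mod_cast le_trans zero_le_one (hw e he)
    have hnn : (0:ℝ) ≤ (n:ℝ) := Nat.cast_nonneg n
    exact mul_nonneg (div_nonneg (mul_nonneg (by positivity) hL0) hε0.le)
      (div_nonneg (mul_nonneg hq' hw') hQpos.le)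
  have hp1 : ∀ e ∈ E, p e ≤ 1 := fun e he => by rw [hp e he]; exact min_le_left _ _
  have hPnonneg : ∀ S : Finset (Sym2 V), S ⊆ E →
      0 ≤ (∏ e ∈ S, p e) * ∏ e ∈ E \ S, (1 - p e) := by
    intro S hS
    apply mul_nonneg
    · exact Finset.prod_nonneg (fun e he => hp0 e (hS he))
    · exact Finset.prod_nonneg (fun e he => by
        have := hp1 e (Finset.mem_sdiff.mp he).1
        linarith)
  have hstep1 : ∑ S ∈ Bad, ((∏ e ∈ S, p e) * ∏ e ∈ E \ S, (1 - p e))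
      ≤ ∑ F ∈ 𝓕, ∏ e ∈ F, (1 - p e) := by
    set Φ : Finset (Sym2 V) → Finset (Sym2 V) :=
      fun S => if h : S ∈ Bad then (hwit S h).choose else ∅ with hΦ
    have hΦmem : ∀ S ∈ Bad, Φ S ∈ 𝓕 := fun S hS => by
      rw [hΦ]; simp only [dif_pos hS]; exact (hwit S hS).choose_spec.1
    have hΦdisj : ∀ S ∈ Bad, Disjoint S (Φ S) := fun S hS => by
      rw [hΦ]; simp only [dif_pos hS]; exact (hwit S hS).choose_spec.2
    rw [← Finset.sum_fiberwise_of_maps_to hΦmem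
      (fun S => (∏ e ∈ S, p e) * ∏ e ∈ E \ S, (1 - p e))]
    apply Finset.sum_le_sum
    intro F hF
    calc ∑ S ∈ Bad.filter (fun S => Φ S = F),
          ((∏ e ∈ S, p e) * ∏ e ∈ E \ S, (1 - p e))
        ≤ ∑ S ∈ E.powerset.filter (fun S => Disjoint S F),
          ((∏ e ∈ S, p e) * ∏ e ∈ E \ S, (1 - p e)) := by
          apply Finset.sum_le_sum_of_subset_of_nonneg
          · intro S hS
            obtain ⟨hSB, hSF⟩ := Finset.mem_filter.mp hS
            exact Finset.mem_filter.mpr ⟨hBadsub hSB, hSF ▸ hΦdisj S hSB⟩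
          · intro S hS _
            exact hPnonneg S (Finset.mem_powerset.mp (Finset.mem_filter.mp hS).1)
      _ = ∏ e ∈ F, (1 - p e) := sum_avoid_eq (h𝓕sub F hF) p
  have hstep2 : ∀ F ∈ 𝓕, ∏ e ∈ F, (1 - p e) ≤ (x ^ (4*n))⁻¹ := fun F hF =>
    perF_bound E w hw W hW2 hn q hq Q hQpos ε hε0 p hp (h𝓕sub F hF) (h𝓕w F hF)
  calc ∑ S ∈ Bad, ((∏ e ∈ S, p e) * ∏ e ∈ E \ S, (1 - p e))
      ≤ ∑ F ∈ 𝓕, ∏ e ∈ F, (1 - p e) := hstep1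
    _ ≤ ∑ _F ∈ 𝓕, (x ^ (4*n))⁻¹ := Finset.sum_le_sum hstep2
    _ = (𝓕.card : ℝ) * (x ^ (4*n))⁻¹ := by rw [Finset.sum_const, nsmul_eq_mul]
    _ ≤ x^(3*n) * (x ^ (4*n))⁻¹ := by
        apply mul_le_mul_of_nonneg_right _ (by positivity)
        calc (𝓕.card : ℝ) ≤ (((n*W) ^ (3*n) : ℕ) : ℝ) := by exact_mod_cast hcard
          _ = x^(3*n) := by push_cast; ring
    _ = 1 / x ^ n := by
        rw [show 4*n = 3*n + n by ring, pow_add]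
        rw [mul_inv]
        rw [← mul_assoc, mul_inv_cancel₀ (by positivity), one_mul, one_div]

end Prob

/-- The probabilistic claim (4.1) of Lemma 4.2: sampling each edge `e`
independently with probability `p e = min 1 ((8n·ln(nW)/ε)·q e·w e/Q)`, the probability that
some pair `(y, z)` with values in `{0, …, W}`, whose support is a laminar family of
odd-cardinality sets, covers every sampled edge while the edges of `E` it violates carry
weighted importance more than `(ε/2)·Q`, is at most `(nW)^{-n}`. -/
theorem stmt_15 {V : Type*} [Fintype V] [DecidableEq V]
    (hn : 4 < Fintype.card V)
    (E : Finset (Sym2 V))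
    (w : Sym2 V → ℤ) (hw : ∀ e ∈ E, 1 ≤ w e)
    (W : ℕ) (hW2 : 2 ≤ W) (hWsum : (∑ e ∈ E, w e) ≤ (W : ℤ))
    (q : Sym2 V → ℝ) (hq : ∀ e ∈ E, 0 < q e)
    (Q : ℝ) (hQ : Q = ∑ e ∈ E, q e * (w e : ℝ))
    (ε : ℝ) (hε0 : 0 < ε) (hε1 : ε < 1)
    (p : Sym2 V → ℝ)
    (hp : ∀ e ∈ E, p e = min 1
      ((8 * Fintype.card V * Real.log (Fintype.card V * W) / ε) *
        (q e * (w e : ℝ) / Q))) :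
    ∑ S ∈ E.powerset.filter (fun S =>
        ∃ (y : V → ℕ) (z : Finset V → ℕ),
          (∀ v, y v ≤ W) ∧ (∀ T, z T ≤ W) ∧
          (∀ T : Finset V, 0 < z T → Odd T.card) ∧
          (∀ T₁ T₂ : Finset V, 0 < z T₁ → 0 < z T₂ →
            T₁ ∩ T₂ = ∅ ∨ T₁ ⊆ T₂ ∨ T₂ ⊆ T₁) ∧
          (∀ e ∈ S, CoversEdgeNat w y z e) ∧
          (ε / 2) * Q <
            ∑ e ∈ E.filter (fun e => ¬ CoversEdgeNat w y z e), q e * (w e : ℝ)),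
      ((∏ e ∈ S, p e) * ∏ e ∈ E \ S, (1 - p e))
      ≤ 1 / ((Fintype.card V : ℝ) * W) ^ Fintype.card V := by
  classical
  by_cases hE : E = ∅
  · subst hE
    have hBadempty : ∀ S ∈ (Finset.powerset (∅ : Finset (Sym2 V))), ¬ (
        ∃ (y : V → ℕ) (z : Finset V → ℕ),
          (∀ v, y v ≤ W) ∧ (∀ T, z T ≤ W) ∧
          (∀ T : Finset V, 0 < z T → Odd T.card) ∧
          (∀ T₁ T₂ : Finset V, 0 < z T₁ → 0 < z T₂ →
            T₁ ∩ T₂ = ∅ ∨ T₁ ⊆ T₂ ∨ T₂ ⊆ T₁) ∧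
          (∀ e ∈ S, CoversEdgeNat w y z e) ∧
          (ε / 2) * Q <
            ∑ e ∈ Finset.filter (fun e => ¬ CoversEdgeNat w y z e) ∅, q e * (w e : ℝ)) := by
      rintro S _ ⟨y, z, _, _, _, _, _, hviol⟩
      rw [hQ] at hviol
      simp at hviol
    rw [Finset.filter_false_of_mem hBadempty, Finset.sum_empty]
    have h5 : (0:ℝ) < (Fintype.card V : ℝ) := by exact_mod_cast (by omega : 0 < Fintype.card V)
    have hW0 : (0:ℝ) < (W : ℝ) := by exact_mod_cast (by omega : 0 < W)
    positivity
  · have hEne : E.Nonempty := Finset.nonempty_iff_ne_empty.mpr hE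
    have hQpos : 0 < Q := by
      rw [hQ]
      apply Finset.sum_pos _ hEne
      intro e he
      have h1 := hq e he
      have hw' : (1:ℝ) ≤ (w e : ℝ) := by exact_mod_cast hw e he
      nlinarith
    set n := Fintype.card V with hn'
    rcases le_or_gt (2^W) ((n*W)^(3*n)) with hcase | hcase
    -- CASE A : few edges
    · apply aux_main hn E w hw W hW2 q hq Q hQpos ε hε0 p hp
        (E.powerset.filter (fun F => (ε/2)*Q < ∑ e ∈ F, q e * (w e : ℝ)))
        (fun F hF => Finset.mem_powerset.mp (Finset.mem_filter.mp hF).1)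
        (fun F hF => (Finset.mem_filter.mp hF).2)
        ?_ _ (Finset.filter_subset _ _) ?_
      · have hEW : E.card ≤ W := by
          have h1 : (E.card : ℤ) ≤ ∑ e ∈ E, w e := by
            calc (E.card : ℤ) = ∑ _e ∈ E, (1:ℤ) := by simp
              _ ≤ ∑ e ∈ E, w e := Finset.sum_le_sum hw
          exact_mod_cast le_trans h1 hWsum
        calc (E.powerset.filter (fun F => (ε/2)*Q < ∑ e ∈ F, q e * (w e : ℝ))).card
            ≤ E.powerset.card := Finset.card_filter_le _ _
          _ = 2^E.card := Finset.card_powerset E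
          _ ≤ 2^W := Nat.pow_le_pow_right (by norm_num) hEW
          _ ≤ (n*W)^(3*n) := hcase
      · intro S hS
        obtain ⟨hSpow, y, z, hyW, hzW, hodd, hlam, hcov, hviol⟩ := Finset.mem_filter.mp hS
        refine ⟨E.filter (fun e => ¬ CoversEdgeNat w y z e), ?_, ?_⟩
        · exact Finset.mem_filter.mpr
            ⟨Finset.mem_powerset.mpr (Finset.filter_subset _ _), hviol⟩
        · rw [Finset.disjoint_left]
          intro e heS heF
          exact (Finset.mem_filter.mp heF).2 (hcov e heS)
    -- CASE B : many edges; count laminar pairs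
    · have hnW10 : 10 ≤ n*W := by
        calc 10 = 5*2 := by norm_num
          _ ≤ n*W := Nat.mul_le_mul (by omega) hW2
      have hW50 : 50 ≤ W := by
        by_contra hcon
        push_neg at hcon
        have h1 : (2:ℕ)^W ≤ 2^49 := Nat.pow_le_pow_right (by norm_num) (by omega)
        have h2 : (10:ℕ)^15 ≤ (n*W)^(3*n) := by
          calc (10:ℕ)^15 ≤ (n*W)^15 := Nat.pow_le_pow_left hnW10 15
            _ ≤ (n*W)^(3*n) := Nat.pow_le_pow_right (by omega) (by omega)
        have h3 : (2:ℕ)^49 < 10^15 := by norm_num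
        omega
      have h250 : 250 ≤ n*W := by
        calc 250 = 5*50 := by norm_num
          _ ≤ n*W := Nat.mul_le_mul (by omega) hW50
      have hW22n : 22*n < W := by
        have h3 : (2:ℕ)^22 ≤ (n*W)^3 := by
          calc (2:ℕ)^22 ≤ 250^3 := by norm_num
            _ ≤ (n*W)^3 := Nat.pow_le_pow_left h250 3
        have h2 : (2:ℕ)^(22*n) ≤ (n*W)^(3*n) := by
          calc (2:ℕ)^(22*n) = (2^22)^n := by rw [← pow_mul]
            _ ≤ ((n*W)^3)^n := Nat.pow_le_pow_left h3 n
            _ = (n*W)^(3*n) := by rw [← pow_mul]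
        exact (Nat.pow_lt_pow_iff_right (by norm_num : 1 < 2)).mp (lt_of_le_of_lt h2 hcase)
      set B := n + n/2 with hBdef
      set C : Finset ((V → Fin (W+1)) × (Finset V → Fin (W+1))) :=
        Finset.univ.filter (fun yz =>
          (∀ T : Finset V, yz.2 T ≠ 0 → Odd T.card) ∧
          (∀ T₁ T₂ : Finset V, yz.2 T₁ ≠ 0 → yz.2 T₂ ≠ 0 →
            T₁ ∩ T₂ = ∅ ∨ T₁ ⊆ T₂ ∨ T₂ ⊆ T₁) ∧
          (ε/2) * Q < ∑ e ∈ E.filter (fun e => ¬ CoversEdgeNat w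
            (fun v => (yz.1 v : ℕ)) (fun T => (yz.2 T : ℕ)) e), q e * (w e : ℝ)) with hC
      set 𝓕 := C.image (fun yz => E.filter (fun e => ¬ CoversEdgeNat w
        (fun v => (yz.1 v : ℕ)) (fun T => (yz.2 T : ℕ)) e)) with h𝓕
      apply aux_main hn E w hw W hW2 q hq Q hQpos ε hε0 p hp 𝓕
        ?_ ?_ ?_ _ (Finset.filter_subset _ _) ?_
      · intro F hF
        obtain ⟨yz, _, rfl⟩ := Finset.mem_image.mp hF
        exact Finset.filter_subset _ _
      · intro F hF
        obtain ⟨yz, hyz, rfl⟩ := Finset.mem_image.mp hF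
        exact ((Finset.mem_filter.mp hyz).2).2.2
      · -- cardinality bound
        calc 𝓕.card ≤ C.card := Finset.card_image_le
          _ ≤ Fintype.card ((V → Fin (W+1)) ×
              ((Fin B → Option (Fin B)) × ((V → Option (Fin B)) × (Fin B → Fin (W+1))))) := by
              rw [← Finset.card_univ]
              apply Finset.card_le_card_of_injOn
                (fun yz => (yz.1, parentB B yz.2, attachB B yz.2, valsB B yz.2))
                (fun _ _ => Finset.mem_univ _)
              intro a ha b hb heq
              obtain ⟨-, hodda, hlama, -⟩ := Finset.mem_filter.mp ha
              obtain ⟨-, hoddb, hlamb, -⟩ := Finset.mem_filter.mp hb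
              have hma : (suppF a.2).card ≤ B := by
                rw [hBdef, hn']
                exact laminar_card_bound_s15 (suppF a.2)
                  (fun A hA => hodda A (mem_suppF.mp hA))
                  (fun A hA A' hA' => hlama A A' (mem_suppF.mp hA) (mem_suppF.mp hA'))
              have hmb : (suppF b.2).card ≤ B := by
                rw [hBdef, hn']
                exact laminar_card_bound_s15 (suppF b.2)
                  (fun A hA => hoddb A (mem_suppF.mp hA))
                  (fun A hA A' hA' => hlamb A A' (mem_suppF.mp hA) (mem_suppF.mp hA'))
              simp only [Prod.mk.injEq] at heq
              obtain ⟨h1, hpar, hatt, hvals⟩ := heq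
              have h2 : a.2 = b.2 :=
                z_encoding_inj hodda hlama hoddb hlamb hma hmb hpar hatt hvals
              exact Prod.ext h1 h2
          _ = (W+1)^n * ((B+1)^B * ((B+1)^n * (W+1)^B)) := by
              simp only [Fintype.card_prod, Fintype.card_fun, Fintype.card_option,
                Fintype.card_fin, ← hn']
          _ ≤ (n*W)^(3*n) := by
              have hXeq : (W+1)^n * ((B+1)^B * ((B+1)^n * (W+1)^B))
                  = ((W+1)*(B+1))^(n+B) := by
                rw [mul_pow, pow_add, pow_add]
                ring
              rw [hXeq]
              have hBW : B + 2 ≤ 2*n := by omega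
              have hB1W : B + 1 ≤ W := by omega
              have h2 : (W+1)*(B+1) ≤ 2*(n*W) := by
                calc (W+1)*(B+1) = W*(B+1) + (B+1) := by ring
                  _ ≤ W*(B+1) + W := by omega
                  _ = W*(B+2) := by ring
                  _ ≤ W*(2*n) := Nat.mul_le_mul_left W hBW
                  _ = 2*(n*W) := by ring
              have hkp : n + B + (3*n - (n+B)) = 3*n := by omega
              have h6k : 3*n ≤ 6*(3*n - (n+B)) := by omega
              calc ((W+1)*(B+1))^(n+B) ≤ (2*(n*W))^(n+B) := Nat.pow_le_pow_left h2 _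
                _ = 2^(n+B) * (n*W)^(n+B) := mul_pow 2 (n*W) (n+B)
                _ ≤ (n*W)^(3*n - (n+B)) * (n*W)^(n+B) := by
                    apply Nat.mul_le_mul_right
                    calc (2:ℕ)^(n+B) ≤ 2^(6*(3*n - (n+B))) :=
                          Nat.pow_le_pow_right (by norm_num) (by omega)
                      _ = 64^(3*n - (n+B)) := by rw [pow_mul]; norm_num
                      _ ≤ (n*W)^(3*n - (n+B)) := Nat.pow_le_pow_left (by omega) _
                _ = (n*W)^(3*n) := by
                    rw [← pow_add]
                    congr 1
                    omega
      · -- witnesses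
        intro S hS
        obtain ⟨hSpow, y, z, hyW, hzW, hodd, hlam, hcov, hviol⟩ := Finset.mem_filter.mp hS
        set y' : V → Fin (W+1) := fun v => (⟨y v, by have := hyW v; omega⟩ : Fin (W+1)) with hy'
        set z' : Finset V → Fin (W+1) := fun T => (⟨z T, by have := hzW T; omega⟩ : Fin (W+1))
          with hz'
        have hyy : (fun v => ((y' v : ℕ))) = y := funext (fun v => rfl)
        have hzz : (fun T => ((z' T : ℕ))) = z := funext (fun T => rfl)
        have hz'ne : ∀ T, z' T ≠ 0 ↔ 0 < z T := by
          intro T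
          rw [hz']
          simp only [ne_eq, Fin.ext_iff, Fin.val_zero]
          omega
        refine ⟨E.filter (fun e => ¬ CoversEdgeNat w y z e), ?_, ?_⟩
        · apply Finset.mem_image.mpr
          refine ⟨(y', z'), ?_, ?_⟩
          · refine Finset.mem_filter.mpr ⟨Finset.mem_univ _, ?_, ?_, ?_⟩
            · intro T hT
              exact hodd T ((hz'ne T).mp hT)
            · intro T₁ T₂ h₁ h₂
              exact hlam T₁ T₂ ((hz'ne _).mp h₁) ((hz'ne _).mp h₂)
            · dsimp only
              rw [hyy, hzz]
              try exact hviol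
          · dsimp only
            try rw [hyy, hzz]
        · rw [Finset.disjoint_left]
          intro e heS heF
          exact (Finset.mem_filter.mp heF).2 (hcov e heS)
end

section
/- Let G = (V, E) be a finite simple graph with edge weights q : E → ℝ, q(e) > 0 for all e, Q = Σ_{e ∈ E} q(e), and let ε ∈ (0,1). Let w_H : E → ℝ be nonnegative weights (the sparsifier) such that for every A ⊆ V, |cut_{w_H}(A) − cut_q(A)| ≤ (ε/100)·cut_q(A). Let T ⊆ V and let S_1, …, S_s ⊆ V be pairwise disjoint sets, each disjoint from T. Suppose that every edge e = (u, v) with w_H(e) > 0 is covered, meaning u ∈ T, or v ∈ T, or there exists i with u ∈ S_i and v ∈ S_i. Then Σ of q(e) over all edges e = (u, v) ∈ E that are not covered (i.e., neither endpoint lies in T and no S_i contains both endpoints) is at most (ε/2)·Q. -/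
open Finset
open scoped Classical

/-- `cutWeight G x A` is the total `x`-weight of the edges of `G` with exactly one endpoint
in `A`. -/
noncomputable def cutWeight {V : Type*} [Fintype V] (G : SimpleGraph V) [Fintype G.edgeSet]
    (x : Sym2 V → ℝ) (A : Finset V) : ℝ :=
  ∑ e ∈ G.edgeFinset.filter (fun e => ∃ u v : V, e = s(u, v) ∧ u ∈ A ∧ v ∉ A), x e

noncomputable def indR (P : Prop) : ℝ := if P then 1 else 0

lemma indR_true {P : Prop} (h : P) : indR P = 1 := by simp [indR, h]
lemma indR_false {P : Prop} (h : ¬ P) : indR P = 0 := by simp [indR, h]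
lemma indR_nonneg (P : Prop) : 0 ≤ indR P := by by_cases h : P <;> simp [indR, h]
lemma indR_le_one (P : Prop) : indR P ≤ 1 := by by_cases h : P <;> simp [indR, h]
lemma indR_congr {P Q : Prop} (h : P ↔ Q) : indR P = indR Q := by simp [indR, h]

def crossE {V : Type*} (A : Finset V) (e : Sym2 V) : Prop :=
  ∃ u v : V, e = s(u, v) ∧ u ∈ A ∧ v ∉ A

lemma crossE_iff {V : Type*} (A : Finset V) (u v : V) :
    crossE A s(u, v) ↔ ((u ∈ A ∧ v ∉ A) ∨ (v ∈ A ∧ u ∉ A)) := by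
  constructor
  · rintro ⟨a, b, hab, ha, hb⟩
    rw [Sym2.eq_iff] at hab
    rcases hab with ⟨rfl, rfl⟩ | ⟨rfl, rfl⟩
    · exact Or.inl ⟨ha, hb⟩
    · exact Or.inr ⟨ha, hb⟩
  · rintro (⟨h1, h2⟩ | ⟨h1, h2⟩)
    · exact ⟨u, v, rfl, h1, h2⟩
    · exact ⟨v, u, Sym2.eq_swap.symm, h1, h2⟩

lemma cutWeight_eq {V : Type*} [Fintype V] (G : SimpleGraph V) [Fintype G.edgeSet]
    (x : Sym2 V → ℝ) (A : Finset V) :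
    cutWeight G x A = ∑ e ∈ G.edgeFinset, x e * indR (crossE A e) := by
  rw [cutWeight, Finset.sum_filter]
  refine Finset.sum_congr rfl fun e he => ?_
  by_cases h : ∃ u v : V, e = s(u, v) ∧ u ∈ A ∧ v ∉ A
  · rw [if_pos h, indR_true (show crossE A e from h), mul_one]
  · rw [if_neg h, indR_false (show ¬ crossE A e from h), mul_zero]

noncomputable def Rset {V : Type*} [Fintype V] {s : ℕ} (T : Finset V)
    (Ssets : Fin s → Finset V) : Finset V :=
  Finset.univ.filter fun v => v ∉ T ∧ ∀ i, v ∉ Ssets i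

lemma mem_Rset {V : Type*} [Fintype V] {s : ℕ} {T : Finset V}
    {Ssets : Fin s → Finset V} {v : V} :
    v ∈ Rset T Ssets ↔ (v ∉ T ∧ ∀ i, v ∉ Ssets i) := by
  simp [Rset]

noncomputable def clsF {V : Type*} [Fintype V] {s : ℕ} (T : Finset V)
    (Ssets : Fin s → Finset V) (w : V) : Finset V :=
  if w ∈ Rset T Ssets then {w} else ∅

section peredge

variable {V : Type*} [Fintype V] {s : ℕ} {T : Finset V} {Ssets : Fin s → Finset V}

/-- sum over `i` of the indicator that `x ∈ Ssets i`. -/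
lemma sum_indR_mem (hSdisj : ∀ i j : Fin s, i ≠ j → Disjoint (Ssets i) (Ssets j)) (x : V) :
    ∑ i : Fin s, indR (x ∈ Ssets i) = indR (∃ i, x ∈ Ssets i) := by
  by_cases h : ∃ i, x ∈ Ssets i
  · obtain ⟨i0, hi0⟩ := h
    rw [Finset.sum_eq_single i0]
    · rw [indR_true hi0, indR_true ⟨i0, hi0⟩]
    · intro j _ hj
      refine indR_false fun hxj => ?_
      exact Finset.disjoint_left.mp (hSdisj j i0 hj) hxj hi0
    · intro h; exact absurd (Finset.mem_univ i0) h
  · push_neg at h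
    rw [indR_false (by push_neg; exact h)]
    exact Finset.sum_eq_zero fun i _ => indR_false (h i)

lemma sum_crossS_of_both (hSdisj : ∀ i j : Fin s, i ≠ j → Disjoint (Ssets i) (Ssets j))
    {u v : V} {i0 : Fin s} (hu : u ∈ Ssets i0) (hv : v ∈ Ssets i0) :
    ∑ i : Fin s, indR (crossE (Ssets i) s(u, v)) = 0 := by
  refine Finset.sum_eq_zero fun i _ => ?_
  refine indR_false fun hc => ?_
  rw [crossE_iff] at hc
  by_cases hi : i = i0
  · subst hi
    rcases hc with ⟨_, h2⟩ | ⟨_, h2⟩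
    · exact h2 hv
    · exact h2 hu
  · rcases hc with ⟨h1, _⟩ | ⟨h1, _⟩
    · exact Finset.disjoint_left.mp (hSdisj i i0 hi) h1 hu
    · exact Finset.disjoint_left.mp (hSdisj i i0 hi) h1 hv

lemma sum_crossS_of_uT (hSdisj : ∀ i j : Fin s, i ≠ j → Disjoint (Ssets i) (Ssets j))
    (hSt : ∀ i : Fin s, Disjoint (Ssets i) T) {u v : V} (hu : u ∈ T) :
    ∑ i : Fin s, indR (crossE (Ssets i) s(u, v)) = indR (∃ i, v ∈ Ssets i) := by
  rw [← sum_indR_mem hSdisj v]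
  refine Finset.sum_congr rfl fun i _ => indR_congr ?_
  rw [crossE_iff]
  have huS : u ∉ Ssets i := fun h => Finset.disjoint_left.mp (hSt i) h hu
  constructor
  · rintro (⟨h1, _⟩ | ⟨h1, _⟩)
    · exact absurd h1 huS
    · exact h1
  · intro hv; exact Or.inr ⟨hv, huS⟩

lemma sum_crossS_of_unc (hSdisj : ∀ i j : Fin s, i ≠ j → Disjoint (Ssets i) (Ssets j))
    {u v : V} (hboth : ¬ ∃ i, u ∈ Ssets i ∧ v ∈ Ssets i) :
    ∑ i : Fin s, indR (crossE (Ssets i) s(u, v)) =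
      indR (∃ i, u ∈ Ssets i) + indR (∃ i, v ∈ Ssets i) := by
  rw [← sum_indR_mem hSdisj u, ← sum_indR_mem hSdisj v, ← Finset.sum_add_distrib]
  refine Finset.sum_congr rfl fun i _ => ?_
  push_neg at hboth
  rw [crossE_iff]
  by_cases hu : u ∈ Ssets i
  · have hv : v ∉ Ssets i := hboth i hu
    rw [indR_true (Or.inl ⟨hu, hv⟩), indR_true hu, indR_false hv]; ring
  · by_cases hv : v ∈ Ssets i
    · rw [indR_true (Or.inr ⟨hv, hu⟩), indR_false hu, indR_true hv]; ring
    · rw [indR_false (by rintro (⟨h, _⟩ | ⟨h, _⟩) <;> [exact hu h; exact hv h]),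
        indR_false hu, indR_false hv]; ring

lemma sum_cross_singletons {u v : V} (huv : u ≠ v) :
    ∑ w : V, indR (crossE (clsF T Ssets w) s(u, v)) =
      indR (u ∈ Rset T Ssets) + indR (v ∈ Rset T Ssets) := by
  have key : ∀ w : V, indR (crossE (clsF T Ssets w) s(u, v)) =
      indR (w ∈ Rset T Ssets ∧ (w = u ∨ w = v)) := by
    intro w
    by_cases hw : w ∈ Rset T Ssets
    · refine indR_congr ?_
      rw [clsF, if_pos hw, crossE_iff]
      simp only [Finset.mem_singleton]
      constructor
      · rintro (⟨h1, _⟩ | ⟨h1, _⟩)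
        · exact ⟨hw, Or.inl h1.symm⟩
        · exact ⟨hw, Or.inr h1.symm⟩
      · rintro ⟨_, (rfl | rfl)⟩
        · exact Or.inl ⟨rfl, fun h => huv h.symm⟩
        · exact Or.inr ⟨rfl, fun h => huv h⟩
    · rw [clsF, if_neg hw, indR_false (by rintro ⟨a, b, -, ha, -⟩; exact Finset.notMem_empty a ha),
        indR_false (fun hh => hw hh.1)]
  simp only [key]
  rw [← Finset.sum_subset (Finset.subset_univ ({u, v} : Finset V))
    (fun w _ hw => indR_false (by
      rintro ⟨_, (rfl | rfl)⟩ <;> simp at hw))]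
  rw [Finset.sum_pair huv]
  congr 1
  · exact indR_congr (by simp)
  · exact indR_congr (by simp)

lemma endpoint_one {x : V} (hx : x ∉ T) :
    indR (∃ i, x ∈ Ssets i) + indR (x ∈ Rset T Ssets) = 1 := by
  by_cases hS : ∃ i, x ∈ Ssets i
  · rw [indR_true hS, indR_false (fun h => ((mem_Rset.mp h).2 hS.choose) hS.choose_spec)]
    ring
  · push_neg at hS
    rw [indR_false (by push_neg; exact hS), indR_true (mem_Rset.mpr ⟨hx, hS⟩)]
    ring

/-- covered edges: the class-cut count equals the `Tᶜ`-cut indicator. -/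
lemma m_covered (hSdisj : ∀ i j : Fin s, i ≠ j → Disjoint (Ssets i) (Ssets j))
    (hSt : ∀ i : Fin s, Disjoint (Ssets i) T) {u v : V} (huv : u ≠ v)
    (hcase : u ∈ T ∨ v ∈ T ∨ ∃ i, u ∈ Ssets i ∧ v ∈ Ssets i) :
    (∑ i : Fin s, indR (crossE (Ssets i) s(u, v)))
      + ∑ w : V, indR (crossE (clsF T Ssets w) s(u, v))
    = indR (crossE Tᶜ s(u, v)) := by
  rw [sum_cross_singletons huv]
  have hTc : crossE (Tᶜ : Finset V) s(u, v) ↔ ((u ∉ T ∧ v ∈ T) ∨ (v ∉ T ∧ u ∈ T)) := by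
    rw [crossE_iff]; simp [Finset.mem_compl]
  rcases hcase with hu | hv | ⟨i0, hu, hv⟩
  · rw [sum_crossS_of_uT hSdisj hSt hu]
    have hRu : u ∉ Rset T Ssets := fun h => (mem_Rset.mp h).1 hu
    rw [indR_false hRu]
    have ht : crossE (Tᶜ : Finset V) s(u, v) ↔ v ∉ T := by rw [hTc]; tauto
    rw [indR_congr ht]
    by_cases hvT : v ∈ T
    · rw [indR_false (not_not_intro hvT),
        indR_false (fun h => Finset.disjoint_left.mp (hSt h.choose) h.choose_spec hvT),
        indR_false (fun h => (mem_Rset.mp h).1 hvT)]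
      ring
    · rw [indR_true hvT]
      have := endpoint_one (Ssets := Ssets) hvT
      linarith
  · -- symmetric: v ∈ T
    have hswap : ∀ A : Finset V, crossE A s(u, v) ↔ crossE A s(v, u) := by
      intro A; rw [crossE_iff, crossE_iff]; tauto
    have h1 : ∀ i, indR (crossE (Ssets i) s(u, v)) = indR (crossE (Ssets i) s(v, u)) :=
      fun i => indR_congr (hswap _)
    simp only [h1]
    rw [sum_crossS_of_uT hSdisj hSt hv]
    have hRv : v ∉ Rset T Ssets := fun h => (mem_Rset.mp h).1 hv
    rw [indR_false hRv]
    have ht : crossE (Tᶜ : Finset V) s(u, v) ↔ u ∉ T := by rw [hTc]; tauto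
    rw [indR_congr ht]
    by_cases huT : u ∈ T
    · rw [indR_false (not_not_intro huT),
        indR_false (fun h => Finset.disjoint_left.mp (hSt h.choose) h.choose_spec huT),
        indR_false (fun h => (mem_Rset.mp h).1 huT)]
      ring
    · rw [indR_true huT]
      have := endpoint_one (Ssets := Ssets) huT
      linarith
  · -- both endpoints in the same Ssets i0
    have huT : u ∉ T := fun h => Finset.disjoint_left.mp (hSt i0) hu h
    have hvT : v ∉ T := fun h => Finset.disjoint_left.mp (hSt i0) hv h
    rw [sum_crossS_of_both hSdisj hu hv,
      indR_false (fun h => (mem_Rset.mp h).2 i0 hu),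
      indR_false (fun h => (mem_Rset.mp h).2 i0 hv),
      indR_false (by rw [hTc]; rintro (⟨_, h⟩ | ⟨_, h⟩) <;> [exact hvT h; exact huT h])]
    ring

/-- uncovered edges: class-cut count is `2`, and `Tᶜ`-cut indicator is `0`. -/
lemma m_uncovered (hSdisj : ∀ i j : Fin s, i ≠ j → Disjoint (Ssets i) (Ssets j))
    {u v : V} (huv : u ≠ v)
    (hcase : ¬ (u ∈ T ∨ v ∈ T ∨ ∃ i, u ∈ Ssets i ∧ v ∈ Ssets i)) :
    ((∑ i : Fin s, indR (crossE (Ssets i) s(u, v)))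
      + ∑ w : V, indR (crossE (clsF T Ssets w) s(u, v)) = 2)
    ∧ indR (crossE Tᶜ s(u, v)) = 0 := by
  push_neg at hcase
  obtain ⟨huT, hvT, hboth⟩ := hcase
  constructor
  · rw [sum_cross_singletons huv, sum_crossS_of_unc hSdisj (by push_neg; exact hboth)]
    have := endpoint_one (Ssets := Ssets) huT
    have := endpoint_one (Ssets := Ssets) hvT
    linarith
  · refine indR_false ?_
    rw [crossE_iff]
    simp only [Finset.mem_compl, not_not]
    rintro (⟨_, h⟩ | ⟨_, h⟩) <;> [exact hvT h; exact huT h]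

end peredge

lemma covered_iff {V : Type*} {s : ℕ} {T : Finset V} {Ssets : Fin s → Finset V} {u v : V} :
    (∃ a b : V, s(u, v) = s(a, b) ∧ (a ∈ T ∨ b ∈ T ∨ ∃ i, a ∈ Ssets i ∧ b ∈ Ssets i))
      ↔ (u ∈ T ∨ v ∈ T ∨ ∃ i, u ∈ Ssets i ∧ v ∈ Ssets i) := by
  constructor
  · rintro ⟨a, b, hab, h⟩
    rw [Sym2.eq_iff] at hab
    rcases hab with ⟨rfl, rfl⟩ | ⟨rfl, rfl⟩
    · exact h
    · rcases h with h | h | ⟨i, h1, h2⟩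
      · exact Or.inr (Or.inl h)
      · exact Or.inl h
      · exact Or.inr (Or.inr ⟨i, h2, h1⟩)
  · intro h; exact ⟨u, v, rfl, h⟩

lemma cutWeight_sub {V : Type*} [Fintype V] (G : SimpleGraph V) [Fintype G.edgeSet]
    (x y : Sym2 V → ℝ) (A : Finset V) :
    cutWeight G x A - cutWeight G y A
      = ∑ e ∈ G.edgeFinset, (x e - y e) * indR (crossE A e) := by
  rw [cutWeight_eq, cutWeight_eq, ← Finset.sum_sub_distrib]
  exact Finset.sum_congr rfl fun e _ => by ring

/-- Cut-sparsifier claim (5.1): if `wH` is an `(ε/100)`-cut sparsifier of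
`G` weighted by the positive importances `q`, and the vertex set `T` together with the
pairwise disjoint sets `S_1, …, S_s` (each disjoint from `T`) covers every edge of positive
`wH`-weight, then the edges of `G` left uncovered carry total importance at most
`(ε/2)·Q`. -/
theorem stmt_17 {V : Type*} [Fintype V] (G : SimpleGraph V) [Fintype G.edgeSet]
    (q : Sym2 V → ℝ) (hq : ∀ e ∈ G.edgeFinset, 0 < q e)
    (Q : ℝ) (hQ : Q = ∑ e ∈ G.edgeFinset, q e)
    (ε : ℝ) (hε0 : 0 < ε) (hε1 : ε < 1)
    (wH : Sym2 V → ℝ) (hwH : ∀ e ∈ G.edgeFinset, 0 ≤ wH e)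
    (hsparse : ∀ A : Finset V,
      |cutWeight G wH A - cutWeight G q A| ≤ (ε / 100) * cutWeight G q A)
    (T : Finset V) (s : ℕ) (Ssets : Fin s → Finset V)
    (hSdisj : ∀ i j : Fin s, i ≠ j → Disjoint (Ssets i) (Ssets j))
    (hSt : ∀ i : Fin s, Disjoint (Ssets i) T)
    (hcov : ∀ e ∈ G.edgeFinset, 0 < wH e →
      ∃ u v : V, e = s(u, v) ∧
        (u ∈ T ∨ v ∈ T ∨ ∃ i : Fin s, u ∈ Ssets i ∧ v ∈ Ssets i)) :
    ∑ e ∈ G.edgeFinset.filter (fun e => ¬ ∃ u v : V, e = s(u, v) ∧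
        (u ∈ T ∨ v ∈ T ∨ ∃ i : Fin s, u ∈ Ssets i ∧ v ∈ Ssets i)), q e
      ≤ (ε / 2) * Q := by
  classical
  set F := G.edgeFinset with hF
  set W := ∑ e ∈ F.filter (fun e => ¬ ∃ u v : V, e = s(u, v) ∧
      (u ∈ T ∨ v ∈ T ∨ ∃ i : Fin s, u ∈ Ssets i ∧ v ∈ Ssets i)), q e with hWdef
  -- abbreviations for the per-edge class-cut counts
  -- Step 1: the main identity
  have h1 : ∑ i : Fin s, (cutWeight G q (Ssets i) - cutWeight G wH (Ssets i))
      = ∑ e ∈ F, (q e - wH e) * ∑ i : Fin s, indR (crossE (Ssets i) e) := by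
    rw [Finset.sum_congr rfl fun (i : Fin s) (_ : i ∈ Finset.univ) =>
      cutWeight_sub G q wH (Ssets i), Finset.sum_comm]
    exact Finset.sum_congr rfl fun e _ => (Finset.mul_sum _ _ _).symm
  have h2 : ∑ w : V, (cutWeight G q (clsF T Ssets w) - cutWeight G wH (clsF T Ssets w))
      = ∑ e ∈ F, (q e - wH e) * ∑ w : V, indR (crossE (clsF T Ssets w) e) := by
    rw [Finset.sum_congr rfl fun (w : V) (_ : w ∈ Finset.univ) =>
      cutWeight_sub G q wH (clsF T Ssets w), Finset.sum_comm]
    exact Finset.sum_congr rfl fun e _ => (Finset.mul_sum _ _ _).symm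
  have h3 : cutWeight G wH Tᶜ - cutWeight G q Tᶜ
      = ∑ e ∈ F, (wH e - q e) * indR (crossE (Tᶜ : Finset V) e) :=
    cutWeight_sub G wH q Tᶜ
  have key : ∑ i : Fin s, (cutWeight G q (Ssets i) - cutWeight G wH (Ssets i))
      + ∑ w : V, (cutWeight G q (clsF T Ssets w) - cutWeight G wH (clsF T Ssets w))
      + (cutWeight G wH Tᶜ - cutWeight G q Tᶜ) = 2 * W := by
    rw [h1, h2, h3, ← Finset.sum_add_distrib, ← Finset.sum_add_distrib, hWdef,
      Finset.mul_sum, Finset.sum_filter]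
    refine Finset.sum_congr rfl fun e he => ?_
    revert he
    refine Sym2.ind (fun u v => ?_) e
    intro he
    have hne : u ≠ v := (G.ne_of_adj ((SimpleGraph.mem_edgeSet G).mp
      (SimpleGraph.mem_edgeFinset.mp he)))
    by_cases hc : u ∈ T ∨ v ∈ T ∨ ∃ i : Fin s, u ∈ Ssets i ∧ v ∈ Ssets i
    · rw [if_neg (not_not_intro (covered_iff.mpr hc))]
      have hm := m_covered hSdisj hSt hne hc
      linear_combination (q s(u, v) - wH s(u, v)) * hm
    · rw [if_pos (fun hcontra => hc (covered_iff.mp hcontra))]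
      obtain ⟨hm, ht⟩ := m_uncovered hSdisj hne hc
      have h0 : wH s(u, v) = 0 :=
        le_antisymm (not_lt.mp fun hpos => hc (covered_iff.mp (hcov _ he hpos))) (hwH _ he)
      linear_combination (q s(u, v) - wH s(u, v)) * hm
        - (q s(u, v) - wH s(u, v)) * ht - 2 * h0
  -- Step 2: bounding each difference via the sparsifier property
  have hb1 : ∀ A : Finset V,
      cutWeight G q A - cutWeight G wH A ≤ ε / 100 * cutWeight G q A := by
    intro A
    have h := abs_le.mp (hsparse A)
    linarith [h.1]
  have hb2 : cutWeight G wH Tᶜ - cutWeight G q Tᶜ ≤ ε / 100 * cutWeight G q Tᶜ :=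
    le_trans (le_abs_self _) (hsparse Tᶜ)
  have step2 : 2 * W ≤ ε / 100 *
      (∑ i : Fin s, cutWeight G q (Ssets i)
        + ∑ w : V, cutWeight G q (clsF T Ssets w) + cutWeight G q Tᶜ) := by
    rw [← key]
    have b1 : ∑ i : Fin s, (cutWeight G q (Ssets i) - cutWeight G wH (Ssets i))
        ≤ ∑ i : Fin s, ε / 100 * cutWeight G q (Ssets i) :=
      Finset.sum_le_sum fun i _ => hb1 (Ssets i)
    have b2 : ∑ w : V, (cutWeight G q (clsF T Ssets w) - cutWeight G wH (clsF T Ssets w))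
        ≤ ∑ w : V, ε / 100 * cutWeight G q (clsF T Ssets w) :=
      Finset.sum_le_sum fun w _ => hb1 (clsF T Ssets w)
    rw [← Finset.mul_sum] at b1 b2
    linarith [b1, b2, hb2]
  -- Step 3: the total q-cut weight of all the class cuts is at most 2Q
  have h1' : ∑ i : Fin s, cutWeight G q (Ssets i)
      = ∑ e ∈ F, q e * ∑ i : Fin s, indR (crossE (Ssets i) e) := by
    rw [Finset.sum_congr rfl fun (i : Fin s) (_ : i ∈ Finset.univ) =>
      cutWeight_eq G q (Ssets i), Finset.sum_comm]
    exact Finset.sum_congr rfl fun e _ => (Finset.mul_sum _ _ _).symm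
  have h2' : ∑ w : V, cutWeight G q (clsF T Ssets w)
      = ∑ e ∈ F, q e * ∑ w : V, indR (crossE (clsF T Ssets w) e) := by
    rw [Finset.sum_congr rfl fun (w : V) (_ : w ∈ Finset.univ) =>
      cutWeight_eq G q (clsF T Ssets w), Finset.sum_comm]
    exact Finset.sum_congr rfl fun e _ => (Finset.mul_sum _ _ _).symm
  have step3 : ∑ i : Fin s, cutWeight G q (Ssets i)
      + ∑ w : V, cutWeight G q (clsF T Ssets w) + cutWeight G q Tᶜ ≤ 2 * Q := by
    rw [h1', h2', cutWeight_eq G q Tᶜ, ← Finset.sum_add_distrib, ← Finset.sum_add_distrib,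
      hQ, Finset.mul_sum]
    refine Finset.sum_le_sum fun e he => ?_
    revert he
    refine Sym2.ind (fun u v => ?_) e
    intro he
    have hne : u ≠ v := (G.ne_of_adj ((SimpleGraph.mem_edgeSet G).mp
      (SimpleGraph.mem_edgeFinset.mp he)))
    have hqpos := hq _ he
    by_cases hc : u ∈ T ∨ v ∈ T ∨ ∃ i : Fin s, u ∈ Ssets i ∧ v ∈ Ssets i
    · have hm := m_covered hSdisj hSt hne hc
      have htle := indR_le_one (crossE (Tᶜ : Finset V) s(u, v))
      nlinarith [hqpos]
    · obtain ⟨hm, ht⟩ := m_uncovered hSdisj hne hc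
      nlinarith [hqpos]
  -- Conclusion
  have hQ0 : 0 ≤ Q := hQ ▸ Finset.sum_nonneg fun e he => (hq e he).le
  have hεd : 0 ≤ ε / 100 := by linarith
  have final : 2 * W ≤ ε / 100 * (2 * Q) :=
    le_trans step2 (mul_le_mul_of_nonneg_left step3 hεd)
  nlinarith [mul_nonneg hε0.le hQ0]
end
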